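/- arXiv:2203.12607 — 8 statements merged into one kernel-verified Lean document; each statement's English description precedes it below -/
import Mathlib

section
/- For every μ > 0, m ∈ ℝ and n ∈ ℕ, the n-th harmonic oscillator eigenfunction ψ_n satisfies the Schrödinger-type equation −(1/(2μ))·ψ_n''(x) + (μ/2)·(x−m)²·ψ_n(x) = (n + 1/2)·ψ_n(x) for all x ∈ ℝ. -/
open MeasureTheory Real

/-- The n-th physicists' Hermite polynomial (as a real function). -/
noncomputable def hermiteH : ℕ → ℝ → ℝ
  | 0, _ => 1
  | 1, x => 2 * x
  | (n + 2), x => 2 * x * hermiteH (n + 1) x - 2 * (n + 1) * hermiteH n x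

/-- The n-th harmonic oscillator eigenfunction. -/
noncomputable def ψ (μ m : ℝ) (n : ℕ) (x : ℝ) : ℝ :=
  Real.sqrt (Real.sqrt μ / (2 ^ n * n.factorial * Real.sqrt Real.pi)) *
    Real.exp (-(μ * (x - m) ^ 2) / 2) * hermiteH n (Real.sqrt μ * (x - m))

/-- Derivative of the n-th Hermite polynomial. -/
noncomputable def Hd : ℕ → ℝ → ℝ
  | 0, _ => 0
  | (n + 1), x => 2 * (n + 1) * hermiteH n x

lemma key (n : ℕ) (x : ℝ) : 2 * x * hermiteH n x - Hd n x = hermiteH (n + 1) x := by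
  cases n with
  | zero => simp [hermiteH, Hd]
  | succ k =>
    have e1 : Hd (k + 1) x = 2 * ((k : ℝ) + 1) * hermiteH k x := rfl
    have e2 : hermiteH (k + 2) x
        = 2 * x * hermiteH (k + 1) x - 2 * ((k : ℝ) + 1) * hermiteH k x := rfl
    rw [e1, e2]

lemma hermiteH_hasDerivAt (n : ℕ) (x : ℝ) : HasDerivAt (hermiteH n) (Hd n x) x := by
  induction n using Nat.strong_induction_on generalizing x with
  | _ n ih =>
    match n with
    | 0 =>
      have h : hermiteH 0 = fun _ : ℝ => (1 : ℝ) := rfl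
      have h2 : Hd 0 x = 0 := rfl
      rw [h2, h]
      exact hasDerivAt_const x 1
    | 1 =>
      have h : hermiteH 1 = fun x : ℝ => 2 * x := rfl
      have h2 : Hd 1 x = 2 := by
        have : Hd 1 x = 2 * ((0:ℕ) + 1 : ℝ) * hermiteH 0 x := rfl
        rw [this]
        have h3 : hermiteH 0 x = 1 := rfl
        rw [h3]; norm_num
      rw [h2, h]
      simpa using (hasDerivAt_id x).const_mul (2 : ℝ)
    | (k + 2) =>
      have h1 := ih k (by omega) x
      have h2 := ih (k + 1) (by omega) x
      have heq : hermiteH (k + 2) = fun y : ℝ =>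
          2 * y * hermiteH (k + 1) y - 2 * ((k : ℝ) + 1) * hermiteH k y := rfl
      rw [heq]
      have hx : HasDerivAt (fun y : ℝ => 2 * y) 2 x := by
        simpa using (hasDerivAt_id x).const_mul (2 : ℝ)
      have hp : HasDerivAt (fun y : ℝ => 2 * y * hermiteH (k + 1) y)
          (2 * hermiteH (k + 1) x + 2 * x * Hd (k + 1) x) x := hx.mul h2
      have hq : HasDerivAt (fun y : ℝ => 2 * ((k : ℝ) + 1) * hermiteH k y)
          (2 * ((k : ℝ) + 1) * Hd k x) x := h1.const_mul _
      have hres := hp.sub hq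
      refine hres.congr_deriv ?_
      have e1 : Hd (k + 2) x = 2 * ((((k : ℕ) + 1 : ℕ) : ℝ) + 1) * hermiteH (k + 1) x := rfl
      have e2 : Hd (k + 1) x = 2 * ((k : ℝ) + 1) * hermiteH k x := rfl
      rw [e1, e2, ← key k x]
      push_cast
      ring

lemma Hd_hasDerivAt (n : ℕ) (x : ℝ) :
    HasDerivAt (Hd n) (2 * x * Hd n x - 2 * n * hermiteH n x) x := by
  cases n with
  | zero =>
    have h2 : Hd 0 x = 0 := rfl
    rw [h2]
    have h : Hd 0 = fun _ : ℝ => (0 : ℝ) := rfl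
    rw [h]
    have h3 : hermiteH 0 x = 1 := rfl
    rw [h3]
    norm_num
    exact hasDerivAt_const x 0
  | succ k =>
    have hder := (hermiteH_hasDerivAt k x).const_mul (2 * ((k : ℝ) + 1))
    have hval : Hd (k + 1) x = 2 * ((k : ℝ) + 1) * hermiteH k x := rfl
    show HasDerivAt (fun y : ℝ => 2 * ((k : ℝ) + 1) * hermiteH k y)
      (2 * x * Hd (k + 1) x - 2 * ((k + 1 : ℕ) : ℝ) * hermiteH (k + 1) x) x
    refine hder.congr_deriv ?_
    rw [hval, ← key k x]
    push_cast
    ring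

theorem stmt_3 (μ m : ℝ) (hμ : 0 < μ) (n : ℕ) (x : ℝ) :
    -(1 / (2 * μ)) * deriv (deriv (ψ μ m n)) x + (μ / 2) * (x - m) ^ 2 * ψ μ m n x
      = ((n : ℝ) + 1 / 2) * ψ μ m n x := by
  have hs0 : (0 : ℝ) < Real.sqrt μ := Real.sqrt_pos.mpr hμ
  set s := Real.sqrt μ with hs_def
  have hs2 : s ^ 2 = μ := Real.sq_sqrt hμ.le
  set C := Real.sqrt (s / (2 ^ n * n.factorial * Real.sqrt Real.pi)) with hC
  have hu : ∀ y : ℝ, HasDerivAt (fun y : ℝ => s * (y - m)) s y := by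
    intro y
    simpa using ((hasDerivAt_id y).sub_const m).const_mul s
  have hE : ∀ y : ℝ, HasDerivAt (fun y : ℝ => Real.exp (-(μ * (y - m) ^ 2) / 2))
      (-(μ * (y - m)) * Real.exp (-(μ * (y - m) ^ 2) / 2)) y := by
    intro y
    have h1 : HasDerivAt (fun y : ℝ => -(μ * (y - m) ^ 2) / 2) (-(μ * (y - m))) y := by
      have h2 := ((((hasDerivAt_id y).sub_const m).pow 2).const_mul μ).neg.div_const 2
      simp only [id_eq] at h2
      refine h2.congr_deriv ?_
      push_cast
      ring
    simpa [mul_comm] using h1.exp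
  have hHc : ∀ (k : ℕ) (y : ℝ), HasDerivAt (fun y : ℝ => hermiteH k (s * (y - m)))
      (s * Hd k (s * (y - m))) y := by
    intro k y
    have h := (hermiteH_hasDerivAt k (s * (y - m))).comp y (hu y)
    simpa [mul_comm, Function.comp_def] using h
  have hHd : ∀ y : ℝ, HasDerivAt (fun y : ℝ => Hd n (s * (y - m)))
      (s * (2 * (s * (y - m)) * Hd n (s * (y - m)) - 2 * n * hermiteH n (s * (y - m)))) y := by
    intro y
    have h := (Hd_hasDerivAt n (s * (y - m))).comp y (hu y)
    simpa [mul_comm, Function.comp_def] using h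
  have hψ : ψ μ m n = fun y : ℝ =>
      C * (Real.exp (-(μ * (y - m) ^ 2) / 2) * hermiteH n (s * (y - m))) := by
    funext y
    simp only [ψ, hC, hs_def]
    ring
  have P1 : ∀ y : ℝ, HasDerivAt (ψ μ m n)
      (C * ((-(μ * (y - m)) * Real.exp (-(μ * (y - m) ^ 2) / 2)) * hermiteH n (s * (y - m)) +
        Real.exp (-(μ * (y - m) ^ 2) / 2) * (s * Hd n (s * (y - m))))) y := by
    intro y
    rw [hψ]
    exact ((hE y).mul (hHc n y)).const_mul C
  have hd1 : deriv (ψ μ m n) = fun y : ℝ =>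
      C * ((-(μ * (y - m)) * Real.exp (-(μ * (y - m) ^ 2) / 2)) * hermiteH n (s * (y - m)) +
        Real.exp (-(μ * (y - m) ^ 2) / 2) * (s * Hd n (s * (y - m)))) :=
    funext fun y => (P1 y).deriv
  have hA : ∀ y : ℝ, HasDerivAt (fun y : ℝ => -(μ * (y - m))) (-μ) y := by
    intro y
    exact (((hasDerivAt_id y).sub_const m).const_mul μ).neg.congr_deriv (by simp)
  have hterm1 : HasDerivAt
      (fun y : ℝ => -(μ * (y - m)) * Real.exp (-(μ * (y - m) ^ 2) / 2) * hermiteH n (s * (y - m)))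
      ((((-μ) * Real.exp (-(μ * (x - m) ^ 2) / 2) +
          -(μ * (x - m)) * (-(μ * (x - m)) * Real.exp (-(μ * (x - m) ^ 2) / 2)))) *
            hermiteH n (s * (x - m)) +
        -(μ * (x - m)) * Real.exp (-(μ * (x - m) ^ 2) / 2) * (s * Hd n (s * (x - m)))) x :=
    (((hA x).mul (hE x)).mul (hHc n x))
  have hterm2 : HasDerivAt
      (fun y : ℝ => Real.exp (-(μ * (y - m) ^ 2) / 2) * (s * Hd n (s * (y - m))))
      (-(μ * (x - m)) * Real.exp (-(μ * (x - m) ^ 2) / 2) * (s * Hd n (s * (x - m))) +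
        Real.exp (-(μ * (x - m) ^ 2) / 2) *
          (s * (s * (2 * (s * (x - m)) * Hd n (s * (x - m)) -
            2 * n * hermiteH n (s * (x - m)))))) x :=
    (hE x).mul ((hHd x).const_mul s)
  have P2 := (hterm1.add hterm2).const_mul C
  have hd2 : deriv (deriv (ψ μ m n)) x =
      C * ((((-μ) * Real.exp (-(μ * (x - m) ^ 2) / 2) +
          -(μ * (x - m)) * (-(μ * (x - m)) * Real.exp (-(μ * (x - m) ^ 2) / 2)))) *
            hermiteH n (s * (x - m)) +
        -(μ * (x - m)) * Real.exp (-(μ * (x - m) ^ 2) / 2) * (s * Hd n (s * (x - m))) +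
        (-(μ * (x - m)) * Real.exp (-(μ * (x - m) ^ 2) / 2) * (s * Hd n (s * (x - m))) +
          Real.exp (-(μ * (x - m) ^ 2) / 2) *
            (s * (s * (2 * (s * (x - m)) * Hd n (s * (x - m)) -
              2 * n * hermiteH n (s * (x - m))))))) := by
    rw [hd1]
    exact P2.deriv
  rw [hd2]
  simp only [hψ]
  rw [← hs2]
  have hsne : s ≠ 0 := ne_of_gt hs0
  field_simp
  ring
end

section
/- For every μ > 0, m ∈ ℝ and j, k ∈ ℕ, the integral v_{jk} := ∫_{−∞}^{∞} (x−m)² ψ_j(x) ψ_k(x) dx equals (1/(2μ))·(2·δ_{jk}·(j + 1/2) + (δ_{j+2,k} + δ_{j,k+2})·√((min(j,k)+1)·(min(j,k)+2))), where δ is the Kronecker delta. -/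
open MeasureTheory Real

lemma hermiteH_succ (n : ℕ) (x : ℝ) :
    hermiteH (n + 1) x = 2 * x * hermiteH n x - 2 * n * hermiteH (n - 1) x := by
  cases n with
  | zero => simp [hermiteH]
  | succ m => simp [hermiteH]

lemma hasDerivAt_hermiteH (n : ℕ) (x : ℝ) :
    HasDerivAt (fun y => hermiteH n y) (2 * n * hermiteH (n - 1) x) x := by
  induction n using Nat.strong_induction_on generalizing x with
  | _ n ih =>
    match n with
    | 0 => simpa [hermiteH] using hasDerivAt_const x (1:ℝ)
    | 1 => simpa [hermiteH] using ((hasDerivAt_id x).const_mul (2:ℝ))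
    | (m + 2) =>
      have h1 := ih (m+1) (by omega) x
      have h0 := ih m (by omega) x
      have hx : HasDerivAt (fun y : ℝ => 2 * y) 2 x := by
        simpa using (hasDerivAt_id x).const_mul (2:ℝ)
      have hfun : (fun y => hermiteH (m+2) y)
          = fun y => 2*y*hermiteH (m+1) y - 2*((m:ℝ)+1)*hermiteH m y := by
        funext y; simp [hermiteH]
      rw [hfun]
      have H := (hx.mul h1).sub (h0.const_mul (2 * ((m:ℝ) + 1)))
      refine H.congr_deriv ?_
      have hr := hermiteH_succ m x
      simp only [Nat.add_sub_cancel] at *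
      push_cast
      rw [hr]; ring

lemma continuous_hermiteH (n : ℕ) : Continuous (hermiteH n) :=
  continuous_iff_continuousAt.2 fun x => (hasDerivAt_hermiteH n x).continuousAt

/-- x * H_n = (1/2) H_{n+1} + n H_{n-1} -/
lemma x_mul_hermiteH (n : ℕ) (x : ℝ) :
    x * hermiteH n x = (1/2) * hermiteH (n+1) x + n * hermiteH (n-1) x := by
  rw [hermiteH_succ]; ring

/-- polynomial companion -/
noncomputable def Hp : ℕ → Polynomial ℝ
  | 0 => 1
  | 1 => Polynomial.C 2 * Polynomial.X
  | (n + 2) => Polynomial.C 2 * Polynomial.X * Hp (n+1) - Polynomial.C (2*((n:ℝ)+1)) * Hp n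

lemma hermiteH_eval (n : ℕ) (x : ℝ) : hermiteH n x = (Hp n).eval x := by
  induction n using Nat.strong_induction_on generalizing x with
  | _ n ih =>
    match n with
    | 0 => simp [hermiteH, Hp]
    | 1 => simp [hermiteH, Hp]
    | (m + 2) =>
      simp [hermiteH, Hp, ih (m+1) (by omega), ih m (by omega)]

lemma integrable_pow_gauss (n : ℕ) :
    Integrable (fun x : ℝ => x ^ n * Real.exp (-x^2)) := by
  have hg : Integrable (fun x : ℝ =>
      (n.factorial * Real.exp (1/2)) * Real.exp (-(1/2) * x^2)) :=
    (integrable_exp_neg_mul_sq (by norm_num)).const_mul _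
  refine hg.mono' ?_ ?_
  · exact ((continuous_pow n).mul (by continuity)).aestronglyMeasurable
  · refine Filter.Eventually.of_forall fun x => ?_
    have ht : (0:ℝ) ≤ |x| := abs_nonneg x
    have h1 : |x| ^ n ≤ n.factorial * Real.exp |x| := by
      have := Real.pow_div_factorial_le_exp |x| ht n
      rw [div_le_iff₀ (by positivity)] at this
      calc |x| ^ n ≤ Real.exp |x| * n.factorial := this
        _ = n.factorial * Real.exp |x| := by ring
    have h2 : Real.exp |x| * Real.exp (-x^2) ≤ Real.exp (1/2) * Real.exp (-(1/2)*x^2) := by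
      rw [← Real.exp_add, ← Real.exp_add]
      apply Real.exp_le_exp.2
      nlinarith [sq_nonneg (|x| - 1), sq_abs x]
    have : ‖x ^ n * Real.exp (-x^2)‖ = |x| ^ n * Real.exp (-x^2) := by
      rw [norm_mul, norm_pow, Real.norm_eq_abs, Real.norm_eq_abs,
        abs_of_pos (Real.exp_pos _)]
    rw [this]
    calc |x| ^ n * Real.exp (-x^2)
        ≤ (n.factorial * Real.exp |x|) * Real.exp (-x^2) := by
          apply mul_le_mul_of_nonneg_right h1 (Real.exp_pos _).le
      _ = n.factorial * (Real.exp |x| * Real.exp (-x^2)) := by ring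
      _ ≤ n.factorial * (Real.exp (1/2) * Real.exp (-(1/2)*x^2)) := by
          apply mul_le_mul_of_nonneg_left h2 (by positivity)
      _ = (n.factorial * Real.exp (1/2)) * Real.exp (-(1/2) * x^2) := by ring

lemma integrable_poly_gauss (P : Polynomial ℝ) :
    Integrable (fun x : ℝ => P.eval x * Real.exp (-x^2)) := by
  have : (fun x : ℝ => P.eval x * Real.exp (-x^2))
      = fun x => ∑ i ∈ Finset.range (P.natDegree + 1),
          P.coeff i * (x ^ i * Real.exp (-x^2)) := by
    funext x
    rw [Polynomial.eval_eq_sum_range, Finset.sum_mul]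
    congr 1; funext i; ring
  rw [this]
  exact integrable_finset_sum _ fun i _ => (integrable_pow_gauss i).const_mul _

lemma tendsto_pow_gauss_cocompact (n : ℕ) :
    Filter.Tendsto (fun x : ℝ => x ^ n * Real.exp (-x^2)) (Filter.cocompact ℝ) (nhds 0) := by
  have h := tendsto_rpow_abs_mul_exp_neg_mul_sq_cocompact (one_pos) (n : ℝ)
  apply squeeze_zero_norm _ h
  intro x
  rw [norm_mul, norm_pow, Real.norm_eq_abs, Real.norm_eq_abs,
    abs_of_pos (Real.exp_pos _), Real.rpow_natCast]
  simp [← pow_abs]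

lemma tendsto_poly_gauss_cocompact (P : Polynomial ℝ) :
    Filter.Tendsto (fun x : ℝ => P.eval x * Real.exp (-x^2)) (Filter.cocompact ℝ) (nhds 0) := by
  have : (fun x : ℝ => P.eval x * Real.exp (-x^2))
      = fun x => ∑ i ∈ Finset.range (P.natDegree + 1),
          P.coeff i * (x ^ i * Real.exp (-x^2)) := by
    funext x
    rw [Polynomial.eval_eq_sum_range, Finset.sum_mul]
    congr 1; funext i; ring
  rw [this]
  have : ∑ i ∈ Finset.range (P.natDegree + 1), (P.coeff i * (0:ℝ)) = 0 := by simp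
  rw [show (0:ℝ) = ∑ i ∈ Finset.range (P.natDegree + 1), (P.coeff i * (0:ℝ)) from this.symm]
  exact tendsto_finset_sum _ fun i _ => ((tendsto_pow_gauss_cocompact i).const_mul _)

lemma integral_deriv_eq_zero' (F F' : ℝ → ℝ) (hd : ∀ x, HasDerivAt F (F' x) x)
    (hi : Integrable F') (ht : Filter.Tendsto F Filter.atTop (nhds 0))
    (hb : Filter.Tendsto F Filter.atBot (nhds 0)) : ∫ x, F' x = 0 := by
  have h1 : ∫ x in Set.Iic (0:ℝ), F' x = F 0 - 0 :=
    MeasureTheory.integral_Iic_of_hasDerivAt_of_tendsto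
      (hd 0).continuousAt.continuousWithinAt (fun x _ => hd x) hi.integrableOn hb
  have h2 : ∫ x in Set.Ioi (0:ℝ), F' x = 0 - F 0 :=
    MeasureTheory.integral_Ioi_of_hasDerivAt_of_tendsto
      (hd 0).continuousAt.continuousWithinAt (fun x _ => hd x) hi.integrableOn ht
  rw [← intervalIntegral.integral_Iic_add_Ioi hi.integrableOn hi.integrableOn, h1, h2]
  ring

/-- helper to transfer polynomial facts -/
lemma integrable_of_poly (f : ℝ → ℝ) (Q : Polynomial ℝ)
    (h : ∀ x, f x = Q.eval x * Real.exp (-x^2)) : Integrable f := by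
  rw [show f = _ from funext h]; exact integrable_poly_gauss Q

lemma tendsto_of_poly_top (f : ℝ → ℝ) (Q : Polynomial ℝ)
    (h : ∀ x, f x = Q.eval x * Real.exp (-x^2)) :
    Filter.Tendsto f Filter.atTop (nhds 0) := by
  rw [show f = _ from funext h]
  exact (tendsto_poly_gauss_cocompact Q).mono_left
    (by rw [cocompact_eq_atBot_atTop]; exact le_sup_right)

lemma tendsto_of_poly_bot (f : ℝ → ℝ) (Q : Polynomial ℝ)
    (h : ∀ x, f x = Q.eval x * Real.exp (-x^2)) :
    Filter.Tendsto f Filter.atBot (nhds 0) := by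
  rw [show f = _ from funext h]
  exact (tendsto_poly_gauss_cocompact Q).mono_left
    (by rw [cocompact_eq_atBot_atTop]; exact le_sup_left)

lemma integrable_gauss_hh (j k : ℕ) :
    Integrable (fun x : ℝ => Real.exp (-x^2) * hermiteH j x * hermiteH k x) := by
  apply integrable_of_poly _ (Hp j * Hp k)
  intro x; simp [hermiteH_eval]; ring

lemma integrable_x2_gauss_hh (j k : ℕ) :
    Integrable (fun x : ℝ => x^2 * Real.exp (-x^2) * hermiteH j x * hermiteH k x) := by
  apply integrable_of_poly _ (Polynomial.X^2 * Hp j * Hp k)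
  intro x; simp [hermiteH_eval]; ring

/-- integration by parts step -/
lemma step (j k : ℕ) :
    ∫ x : ℝ, Real.exp (-x^2) * hermiteH j x * hermiteH (k+1) x
      = 2 * j * ∫ x : ℝ, Real.exp (-x^2) * hermiteH (j-1) x * hermiteH k x := by
  set F : ℝ → ℝ := fun x => hermiteH j x * (Real.exp (-x^2) * hermiteH k x) with hF
  set F' : ℝ → ℝ := fun x =>
    2 * j * (Real.exp (-x^2) * hermiteH (j-1) x * hermiteH k x)
      - Real.exp (-x^2) * hermiteH j x * hermiteH (k+1) x with hF'
  have hgd : ∀ x : ℝ, HasDerivAt (fun y => Real.exp (-y^2) * hermiteH k y)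
      (-(Real.exp (-x^2) * hermiteH (k+1) x)) x := by
    intro x
    have he : HasDerivAt (fun y : ℝ => Real.exp (-y^2)) (-(2*x) * Real.exp (-x^2)) x := by
      have h1 : HasDerivAt (fun y : ℝ => -y^2) (-(2*x)) x := by
        simpa using ((hasDerivAt_pow 2 x).fun_neg)
      simpa [mul_comm] using h1.exp
    have := he.mul (hasDerivAt_hermiteH k x)
    refine this.congr_deriv ?_
    rw [hermiteH_succ k x]; ring
  have hd : ∀ x : ℝ, HasDerivAt F (F' x) x := by
    intro x
    have := (hasDerivAt_hermiteH j x).mul (hgd x)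
    refine this.congr_deriv ?_
    simp only [hF']; ring
  have hi1 := integrable_gauss_hh (j-1) k
  have hi2 := integrable_gauss_hh j (k+1)
  have hiF' : Integrable F' := by
    apply Integrable.sub (hi1.const_mul _)
    exact hi2
  have h0 : ∫ x, F' x = 0 := by
    apply integral_deriv_eq_zero' F F' hd hiF'
    · apply tendsto_of_poly_top _ (Hp j * Hp k)
      intro x; simp [hF, hermiteH_eval]; ring
    · apply tendsto_of_poly_bot _ (Hp j * Hp k)
      intro x; simp [hF, hermiteH_eval]; ring
  have := MeasureTheory.integral_sub (hi1.const_mul (2*(j:ℝ))) hi2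
  simp only [hF'] at h0
  rw [MeasureTheory.integral_sub (hi1.const_mul (2*(j:ℝ))) hi2] at h0
  rw [MeasureTheory.integral_const_mul] at h0
  linarith

lemma G_eq (j k : ℕ) :
    ∫ x : ℝ, Real.exp (-x^2) * hermiteH j x * hermiteH k x
      = if j = k then 2^j * (j.factorial : ℝ) * Real.sqrt Real.pi else 0 := by
  induction j generalizing k with
  | zero =>
    cases k with
    | zero =>
      have : ∫ x : ℝ, Real.exp (-x^2) * hermiteH 0 x * hermiteH 0 x
          = ∫ x : ℝ, Real.exp (-(1:ℝ)*x^2) := by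
        congr 1; funext x; simp [hermiteH]
      rw [this, integral_gaussian]
      simp
    | succ k =>
      rw [step 0 k]
      simp
  | succ j ih =>
    cases k with
    | zero =>
      have hcomm : ∫ x : ℝ, Real.exp (-x^2) * hermiteH (j+1) x * hermiteH 0 x
          = ∫ x : ℝ, Real.exp (-x^2) * hermiteH 0 x * hermiteH (j+1) x := by
        congr 1; funext x; ring
      rw [hcomm, step 0 j]
      simp
    | succ k =>
      rw [step (j+1) k]
      simp only [Nat.add_sub_cancel, ih k]
      by_cases h : j = k
      · subst h
        simp [Nat.factorial_succ]
        push_cast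
        ring
      · simp [h, fun hh => h (Nat.succ_injective hh)]

lemma X2_eq (j k : ℕ) :
    ∫ x : ℝ, x^2 * Real.exp (-x^2) * hermiteH j x * hermiteH k x
      = (1/4) * (if j+1 = k+1 then 2^(j+1) * (((j+1).factorial) : ℝ) * Real.sqrt Real.pi else 0)
        + ((k:ℝ)/2) * (if j+1 = k-1 then 2^(j+1) * (((j+1).factorial) : ℝ) * Real.sqrt Real.pi else 0)
        + ((j:ℝ)/2) * (if j-1 = k+1 then 2^(j-1) * (((j-1).factorial) : ℝ) * Real.sqrt Real.pi else 0)
        + ((j:ℝ)*(k:ℝ)) * (if j-1 = k-1 then 2^(j-1) * (((j-1).factorial) : ℝ) * Real.sqrt Real.pi else 0) := by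
  have hpt : (fun x : ℝ => x^2 * Real.exp (-x^2) * hermiteH j x * hermiteH k x)
      = fun x : ℝ =>
        ((1/4) * (Real.exp (-x^2) * hermiteH (j+1) x * hermiteH (k+1) x)
          + (k:ℝ)/2 * (Real.exp (-x^2) * hermiteH (j+1) x * hermiteH (k-1) x))
        + ((j:ℝ)/2 * (Real.exp (-x^2) * hermiteH (j-1) x * hermiteH (k+1) x)
          + (j:ℝ)*(k:ℝ) * (Real.exp (-x^2) * hermiteH (j-1) x * hermiteH (k-1) x)) := by
    funext x
    have aj := x_mul_hermiteH j x
    have ak := x_mul_hermiteH k x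
    have : x^2 * Real.exp (-x^2) * hermiteH j x * hermiteH k x
        = Real.exp (-x^2) * ((x * hermiteH j x) * (x * hermiteH k x)) := by ring
    rw [this, aj, ak]; ring
  rw [hpt]
  have i1 := (integrable_gauss_hh (j+1) (k+1)).const_mul ((1:ℝ)/4)
  have i2 := (integrable_gauss_hh (j+1) (k-1)).const_mul ((k:ℝ)/2)
  have i3 := (integrable_gauss_hh (j-1) (k+1)).const_mul ((j:ℝ)/2)
  have i4 := (integrable_gauss_hh (j-1) (k-1)).const_mul ((j:ℝ)*(k:ℝ))
  have i12 : Integrable (fun x : ℝ =>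
      (1/4) * (Real.exp (-x^2) * hermiteH (j+1) x * hermiteH (k+1) x)
        + (k:ℝ)/2 * (Real.exp (-x^2) * hermiteH (j+1) x * hermiteH (k-1) x)) := i1.add i2
  have i34 : Integrable (fun x : ℝ =>
      (j:ℝ)/2 * (Real.exp (-x^2) * hermiteH (j-1) x * hermiteH (k+1) x)
        + (j:ℝ)*(k:ℝ) * (Real.exp (-x^2) * hermiteH (j-1) x * hermiteH (k-1) x)) := i3.add i4
  rw [MeasureTheory.integral_add i12 i34,
    MeasureTheory.integral_add i1 i2, MeasureTheory.integral_add i3 i4,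
    MeasureTheory.integral_const_mul, MeasureTheory.integral_const_mul,
    MeasureTheory.integral_const_mul, MeasureTheory.integral_const_mul,
    G_eq, G_eq, G_eq, G_eq]
  ring

set_option maxHeartbeats 2000000 in
theorem stmt_4 (μ m : ℝ) (hμ : 0 < μ) (j k : ℕ) :
    ∫ x : ℝ, (x - m) ^ 2 * ψ μ m j x * ψ μ m k x
      = (1 / (2 * μ)) *
          (2 * (if j = k then (1 : ℝ) else 0) * ((j : ℝ) + 1 / 2)
            + ((if j + 2 = k then (1 : ℝ) else 0) + (if j = k + 2 then (1 : ℝ) else 0)) *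
                Real.sqrt (((min j k : ℝ) + 1) * ((min j k : ℝ) + 2))) := by
  have hc : 0 < Real.sqrt μ := Real.sqrt_pos.2 hμ
  set c := Real.sqrt μ with hcdef
  have hc2 : c^2 = μ := Real.sq_sqrt hμ.le
  set P := Real.sqrt Real.pi with hPdef
  have hP : 0 < P := Real.sqrt_pos.2 Real.pi_pos
  set Nj := Real.sqrt (c / (2^j * j.factorial * P)) with hNj
  set Nk := Real.sqrt (c / (2^k * k.factorial * P)) with hNk
  set g : ℝ → ℝ := fun y => y^2 * Real.exp (-y^2) * hermiteH j y * hermiteH k y with hg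
  have key : ∀ x : ℝ, (x - m) ^ 2 * ψ μ m j x * ψ μ m k x
      = (Nj * Nk / μ) * g (c * (x - m)) := by
    intro x
    simp only [ψ, hg, hNj, hNk, hPdef, hcdef]
    have he : Real.exp (-(μ * (x - m) ^ 2) / 2) * Real.exp (-(μ * (x - m) ^ 2) / 2)
        = Real.exp (-(Real.sqrt μ * (x - m))^2) := by
      rw [← Real.exp_add, mul_pow, Real.sq_sqrt hμ.le]
      ring_nf
    have hsq : (Real.sqrt μ * (x - m))^2 = μ * (x - m)^2 := by
      rw [mul_pow, Real.sq_sqrt hμ.le]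
    calc (x - m) ^ 2 * (Real.sqrt (Real.sqrt μ / (2 ^ j * j.factorial * Real.sqrt Real.pi)) *
            Real.exp (-(μ * (x - m) ^ 2) / 2) * hermiteH j (Real.sqrt μ * (x - m)))
          * (Real.sqrt (Real.sqrt μ / (2 ^ k * k.factorial * Real.sqrt Real.pi)) *
            Real.exp (-(μ * (x - m) ^ 2) / 2) * hermiteH k (Real.sqrt μ * (x - m)))
        = (Real.sqrt (Real.sqrt μ / (2 ^ j * j.factorial * Real.sqrt Real.pi)) *
            Real.sqrt (Real.sqrt μ / (2 ^ k * k.factorial * Real.sqrt Real.pi))) *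
          ((x-m)^2 * (Real.exp (-(μ * (x - m) ^ 2) / 2) * Real.exp (-(μ * (x - m) ^ 2) / 2)) *
            hermiteH j (Real.sqrt μ * (x - m)) * hermiteH k (Real.sqrt μ * (x - m))) := by ring
      _ = _ := by
          rw [he]
          rw [show (Real.sqrt μ * (x - m))^2 * Real.exp (-(Real.sqrt μ * (x - m))^2) *
              hermiteH j (Real.sqrt μ * (x - m)) * hermiteH k (Real.sqrt μ * (x - m))
            = μ * ((x-m)^2 * Real.exp (-(Real.sqrt μ * (x - m))^2) *
              hermiteH j (Real.sqrt μ * (x - m)) * hermiteH k (Real.sqrt μ * (x - m))) from by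
            rw [hsq]; ring]
          field_simp
  have hint : ∫ x : ℝ, (x - m) ^ 2 * ψ μ m j x * ψ μ m k x
      = (Nj * Nk / μ) * (c⁻¹ * ∫ y : ℝ, g y) := by
    calc ∫ x : ℝ, (x - m) ^ 2 * ψ μ m j x * ψ μ m k x
        = ∫ x : ℝ, (Nj * Nk / μ) * g (c * (x - m)) := by
          congr 1; funext x; exact key x
      _ = (Nj * Nk / μ) * ∫ x : ℝ, g (c * (x - m)) := MeasureTheory.integral_const_mul _ _
      _ = (Nj * Nk / μ) * ∫ x : ℝ, g (c * x) := by
          rw [MeasureTheory.integral_sub_right_eq_self (fun x => g (c * x)) m]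
      _ = (Nj * Nk / μ) * (|c⁻¹| • ∫ y : ℝ, g y) := by
          rw [MeasureTheory.Measure.integral_comp_mul_left g c]
      _ = (Nj * Nk / μ) * (c⁻¹ * ∫ y : ℝ, g y) := by
          rw [abs_of_pos (inv_pos.2 hc), smul_eq_mul]
  rw [hint, hg]
  rw [show (∫ y : ℝ, y^2 * Real.exp (-y^2) * hermiteH j y * hermiteH k y) = _ from X2_eq j k]
  have hNj2 : Nj^2 = c / (2^j * j.factorial * P) := Real.sq_sqrt (by positivity)
  have hNk2 : Nk^2 = c / (2^k * k.factorial * P) := Real.sq_sqrt (by positivity)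
  have hNjnn : 0 ≤ Nj := Real.sqrt_nonneg _
  have hNknn : 0 ≤ Nk := Real.sqrt_nonneg _
  have key2 : ∀ A B : ℝ, 0 ≤ A → 0 ≤ B → A^2 = B^2 → A = B := by
    intro A B hA hB h; nlinarith
  by_cases h1 : j = k
  · subst h1
    rw [if_pos rfl, if_pos rfl, if_neg (by omega : ¬(j+1 = j-1)),
      if_neg (by omega : ¬(j-1 = j+1)), if_pos rfl,
      if_neg (by omega : ¬(j+2 = j)), if_neg (by omega : ¬(j = j+2))]
    have hNjj : Nj * Nj = c / (2^j * j.factorial * P) := by nlinarith [hNj2]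
    cases j with
    | zero =>
      simp only [pow_zero, Nat.factorial_zero, Nat.cast_one, Nat.cast_zero, Nat.zero_sub,
        Nat.factorial_one, pow_one] at hNjj ⊢
      rw [show Nj * Nk / μ = Nj * Nj / μ from rfl]
      rw [hNjj]
      field_simp
      ring
    | succ i =>
      rw [show Nj * Nk / μ = Nj * Nj / μ from rfl, hNjj]
      simp only [Nat.add_sub_cancel]
      have hf1 : (((i+1)+1).factorial : ℝ) = ((i:ℝ)+2) * (((i:ℝ)+1) * (i.factorial : ℝ)) := by
        rw [Nat.factorial_succ, Nat.factorial_succ]; push_cast; ring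
      have hf2 : ((i+1).factorial : ℝ) = ((i:ℝ)+1) * (i.factorial : ℝ) := by
        rw [Nat.factorial_succ]; push_cast; ring
      rw [hf1, hf2]
      have hfne : (i.factorial : ℝ) ≠ 0 := by positivity
      field_simp
      push_cast
      ring
  · by_cases h2 : j + 2 = k
    · subst h2
      rw [if_neg (by omega : ¬(j+1 = j+2+1)), if_pos (by omega : j+1 = j+2-1),
        if_neg (by omega : ¬(j-1 = j+2+1)), if_neg (by omega : ¬(j-1 = j+2-1)),
        if_neg (by omega : ¬(j = j+2)), if_pos rfl, if_neg (by omega : ¬(j = j+2+2)),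
        min_eq_left (by exact_mod_cast (by omega : (j:ℕ) ≤ j + 2) : (j:ℝ) ≤ ((j+2:ℕ):ℝ))]
      have hfj : (j.factorial : ℝ) ≠ 0 := by positivity
      have hf1 : ((j+1).factorial : ℝ) = ((j:ℝ)+1) * (j.factorial : ℝ) := by
        rw [Nat.factorial_succ]; push_cast; ring
      have hf2 : ((j+2).factorial : ℝ) = ((j:ℝ)+2) * (((j:ℝ)+1) * (j.factorial : ℝ)) := by
        rw [show j+2 = (j+1)+1 from rfl, Nat.factorial_succ, Nat.factorial_succ]; push_cast; ring
      apply key2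
      · have hfp : (0:ℝ) ≤ ((j+2:ℕ):ℝ) := by positivity
        have hfq : (0:ℝ) ≤ 2 ^ (j + 1) * (((j+1).factorial:ℝ)) * Real.sqrt Real.pi := by positivity
        have : (0:ℝ) ≤ 1 / 4 * 0 + ((j+2:ℕ):ℝ) / 2 * (2 ^ (j + 1) * (((j+1).factorial:ℝ)) * Real.sqrt Real.pi) + (j:ℝ) / 2 * 0 + (j:ℝ) * ((j+2:ℕ):ℝ) * 0 := by
          positivity
        positivity
      · positivity
      · have expand : (Nj * Nk / μ * (c⁻¹ * (1 / 4 * 0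
            + ((j+2:ℕ):ℝ) / 2 * (2 ^ (j + 1) * (((j+1).factorial:ℝ)) * Real.sqrt Real.pi)
            + (j:ℝ) / 2 * 0 + (j:ℝ) * ((j+2:ℕ):ℝ) * 0)))^2
            = Nj^2 * Nk^2 * (1/μ)^2 * (c⁻¹)^2 *
              (((j+2:ℕ):ℝ) / 2 * (2 ^ (j + 1) * (((j+1).factorial:ℝ)) * Real.sqrt Real.pi))^2 := by
          ring
        have expand2 : (1 / (2*μ) * (2 * 0 * ((j:ℝ) + 1/2)
            + (1 + 0) * Real.sqrt (((j:ℝ)+1) * ((j:ℝ)+2))))^2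
            = (1/(2*μ))^2 * (Real.sqrt (((j:ℝ)+1) * ((j:ℝ)+2)))^2 := by ring
        rw [expand, expand2, hNj2, hNk2, Real.sq_sqrt (by positivity : (0:ℝ) ≤ ((j:ℝ)+1) * ((j:ℝ)+2)),
          hf1, hf2, hPdef]
        rw [← hc2]
        have hcne : c ≠ 0 := hc.ne'
        have hPne : Real.sqrt Real.pi ≠ 0 := hP.ne'
        push_cast
        field_simp
        ring
    · by_cases h3 : j = k + 2
      · subst h3
        rw [if_neg (by omega : ¬(k+2+1 = k+1)), if_neg (by omega : ¬(k+2+1 = k-1)),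
          if_pos (by omega : k+2-1 = k+1), if_neg (by omega : ¬(k+2-1 = k-1)),
          if_neg (by omega : ¬(k+2 = k)), if_neg (by omega : ¬(k+2+2 = k)), if_pos rfl,
          min_eq_right (by exact_mod_cast (by omega : (k:ℕ) ≤ k + 2) : (k:ℝ) ≤ ((k+2:ℕ):ℝ)),
          show k+2-1 = k+1 from rfl]
        have hfk : (k.factorial : ℝ) ≠ 0 := by positivity
        have hf1 : ((k+1).factorial : ℝ) = ((k:ℝ)+1) * (k.factorial : ℝ) := by
          rw [Nat.factorial_succ]; push_cast; ring
        have hf2 : ((k+2).factorial : ℝ) = ((k:ℝ)+2) * (((k:ℝ)+1) * (k.factorial : ℝ)) := by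
          rw [show k+2 = (k+1)+1 from rfl, Nat.factorial_succ, Nat.factorial_succ]; push_cast; ring
        apply key2
        · have hfq : (0:ℝ) ≤ 2 ^ (k + 1) * (((k+1).factorial:ℝ)) * Real.sqrt Real.pi := by positivity
          have : (0:ℝ) ≤ 1 / 4 * 0 + (k:ℝ) / 2 * 0 + ((k+2:ℕ):ℝ) / 2 * (2 ^ (k + 1) * (((k+1).factorial:ℝ)) * Real.sqrt Real.pi) + ((k+2:ℕ):ℝ) * (k:ℝ) * 0 := by
            positivity
          positivity
        · positivity
        · have expand : (Nj * Nk / μ * (c⁻¹ * (1 / 4 * 0 + (k:ℝ) / 2 * 0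
              + ((k+2:ℕ):ℝ) / 2 * (2 ^ (k + 1) * (((k+1).factorial:ℝ)) * Real.sqrt Real.pi)
              + ((k+2:ℕ):ℝ) * (k:ℝ) * 0)))^2
              = Nj^2 * Nk^2 * (1/μ)^2 * (c⁻¹)^2 *
                (((k+2:ℕ):ℝ) / 2 * (2 ^ (k + 1) * (((k+1).factorial:ℝ)) * Real.sqrt Real.pi))^2 := by
            ring
          have expand2 : (1 / (2*μ) * (2 * 0 * (((k+2:ℕ):ℝ) + 1/2)
              + (0 + 1) * Real.sqrt (((k:ℝ)+1) * ((k:ℝ)+2))))^2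
              = (1/(2*μ))^2 * (Real.sqrt (((k:ℝ)+1) * ((k:ℝ)+2)))^2 := by ring
          rw [expand, expand2, hNj2, hNk2, Real.sq_sqrt (by positivity : (0:ℝ) ≤ ((k:ℝ)+1) * ((k:ℝ)+2)),
            hf1, hf2, hPdef]
          rw [← hc2]
          have hcne : c ≠ 0 := hc.ne'
          have hPne : Real.sqrt Real.pi ≠ 0 := hP.ne'
          push_cast
          field_simp
          ring
      · rw [if_neg (by omega : ¬(j+1 = k+1)), if_neg (by omega : ¬(j+1 = k-1)),
          if_neg (by omega : ¬(j-1 = k+1)), if_neg h1, if_neg h2, if_neg h3]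
        have ht4 : (j:ℝ) * (k:ℝ) * (if j-1 = k-1 then (2:ℝ)^(j-1) * (((j-1).factorial):ℝ) * Real.sqrt Real.pi else 0) = 0 := by
          rcases Nat.eq_zero_or_pos j with hj | hj
          · subst hj; simp
          · rcases Nat.eq_zero_or_pos k with hk | hk
            · subst hk; simp
            · rw [if_neg (by omega)]; ring
        rw [ht4]
        simp
end

section
/- For μ > 0, the function I_F(p,α) = p·2μ + (1−p)·10μ − 4μ·cos(α)·√(2p(1−p)) (the Fisher information of the superposition √p·ψ_0 + e^{iα}√(1−p)·ψ_2) attains its minimum over p ∈ [0,1] and α ∈ ℝ at α = 0 and p = 1/2 + 1/√6, and the minimum value is (6 − 2√6)·μ. -/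
/-!
Writing `s = √(2p(1-p))`, the Fisher information is `μ (10 - 8p - 4 s cos α)`, so for `μ > 0`
it is minimised at `cos α = 1` and it remains to maximise `4(p - 1/2) + 2s`. On `[0, 1]` the point
`(p - 1/2, s/√2)` lies on the circle of radius `1/2`, and Cauchy–Schwarz against `(4, 2√2)` gives
`4(p - 1/2) + 2s ≤ √24 / 2 = √6`, with equality at `p = 1/2 + 1/√6`, where `s = 1/√6`.
-/

open Real

noncomputable def fisherInfo (μ p α : ℝ) : ℝ :=
  p * (2 * μ) + (1 - p) * (10 * μ) - 4 * μ * cos α * √(2 * p * (1 - p))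

lemma fisherInfo_zero (μ p : ℝ) :
    fisherInfo μ p 0 = μ * (10 - 8 * p - 4 * √(2 * p * (1 - p))) := by
  rw [fisherInfo, cos_zero]
  ring

lemma fisherInfo_zero_le {μ : ℝ} (hμ : 0 ≤ μ) (p α : ℝ) : fisherInfo μ p 0 ≤ fisherInfo μ p α := by
  have hcos : cos α * √(2 * p * (1 - p)) ≤ √(2 * p * (1 - p)) :=
    mul_le_of_le_one_left (sqrt_nonneg _) (cos_le_one α)
  rw [fisherInfo, fisherInfo, cos_zero]
  nlinarith

lemma four_mul_sub_half_add_two_mul_sqrt_le {p : ℝ} (hp : p ∈ Set.Icc (0 : ℝ) 1) :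
    4 * (p - 1 / 2) + 2 * √(2 * p * (1 - p)) ≤ √6 := by
  obtain ⟨hp0, hp1⟩ := hp
  set s := √(2 * p * (1 - p))
  have hs : s ^ 2 = 2 * p * (1 - p) := sq_sqrt (by nlinarith)
  -- Lagrange's identity: `6 - (4u + 2s)^2 = 8 (u - s)^2` for `u = p - 1/2`, as `4u^2 + 2s^2 = 1`.
  have hsq : (4 * (p - 1 / 2) + 2 * s) ^ 2 ≤ 6 := by nlinarith [sq_nonneg (p - 1 / 2 - s)]
  exact (le_abs_self _).trans (abs_le_sqrt hsq)

lemma one_div_sqrt_six : 1 / √6 = √6 / 6 := by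
  have h6 : √6 ^ 2 = 6 := sq_sqrt (by norm_num)
  field_simp
  linear_combination -h6

lemma sqrt_two_mul_optimum_mul_one_sub :
    √(2 * (1 / 2 + 1 / √6) * (1 - (1 / 2 + 1 / √6))) = √6 / 6 := by
  have h6 : √6 ^ 2 = 6 := sq_sqrt (by norm_num)
  have hsq : 2 * (1 / 2 + √6 / 6) * (1 - (1 / 2 + √6 / 6)) = (√6 / 6) ^ 2 := by
    linear_combination (-1 / 12 : ℝ) * h6
  rw [one_div_sqrt_six, hsq, sqrt_sq (by positivity)]

lemma fisherInfo_optimum (μ : ℝ) : fisherInfo μ (1 / 2 + 1 / √6) 0 = (6 - 2 * √6) * μ := by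
  rw [fisherInfo_zero, sqrt_two_mul_optimum_mul_one_sub, one_div_sqrt_six]
  ring

theorem stmt_9 (μ : ℝ) (hμ : 0 < μ) :
    (∀ p ∈ Set.Icc (0 : ℝ) 1, ∀ α : ℝ,
        (1 / 2 + 1 / Real.sqrt 6) * (2 * μ) + (1 - (1 / 2 + 1 / Real.sqrt 6)) * (10 * μ)
            - 4 * μ * Real.cos 0 *
                Real.sqrt (2 * (1 / 2 + 1 / Real.sqrt 6) * (1 - (1 / 2 + 1 / Real.sqrt 6)))
          ≤ p * (2 * μ) + (1 - p) * (10 * μ)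
              - 4 * μ * Real.cos α * Real.sqrt (2 * p * (1 - p)))
    ∧ (1 / 2 + 1 / Real.sqrt 6) * (2 * μ) + (1 - (1 / 2 + 1 / Real.sqrt 6)) * (10 * μ)
          - 4 * μ * Real.cos 0 *
              Real.sqrt (2 * (1 / 2 + 1 / Real.sqrt 6) * (1 - (1 / 2 + 1 / Real.sqrt 6)))
        = (6 - 2 * Real.sqrt 6) * μ := by
  refine ⟨fun p hp α => ?_, fisherInfo_optimum μ⟩
  have hbound := four_mul_sub_half_add_two_mul_sqrt_le hp
  calc fisherInfo μ (1 / 2 + 1 / √6) 0 = μ * (6 - 2 * √6) := by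
        rw [fisherInfo_optimum, mul_comm]
    _ ≤ μ * (10 - 8 * p - 4 * √(2 * p * (1 - p))) :=
        mul_le_mul_of_nonneg_left (by linarith) hμ.le
    _ = fisherInfo μ p 0 := (fisherInfo_zero μ p).symm
    _ ≤ fisherInfo μ p α := fisherInfo_zero_le hμ.le p α
end

section
/- For every μ > 0, the minimal Fisher information of the superposition of the ground state and the second excited state satisfies (6 − 2√6)·μ < 2μ; that is, the minimum Fisher information of the superposition √p·ψ_0 + √(1−p)·ψ_2 over p ∈ [0,1] is strictly smaller than the Fisher information I_F[ψ_0] = 2μ of the ground state. -/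
/-!
Writing `x = 2p - 1`, the square root term is `√(2p(1-p)) = √((1 - x²)/2)`, so the bound
`2√(2p(1-p)) + 4p ≤ 2 + √6` is the Cauchy–Schwarz inequality
`√2 · √(1 - x²) + 2 · x ≤ √(2 + 4) · √((1 - x²) + x²)`, with equality when
`(√(1 - x²), x)` is parallel to `(√2, 2)`, i.e. at `p = 1/2 + √6/6`.
-/

open Real

lemma two_lt_sqrt_six : 2 < √6 := by
  rw [show (2 : ℝ) = √(2 ^ 2) by simp]
  exact Real.sqrt_lt_sqrt (by norm_num) (by norm_num)

lemma sqrt_six_lt_three : √6 < 3 := by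
  rw [show (3 : ℝ) = √(3 ^ 2) by simp]
  exact Real.sqrt_lt_sqrt (by norm_num) (by norm_num)

lemma two_mul_sqrt_two_mul_mul_one_sub_le {p : ℝ} (hp₀ : 0 ≤ p) (hp₁ : p ≤ 1) :
    2 * √(2 * p * (1 - p)) ≤ 2 + √6 - 4 * p := by
  have hs : √6 ^ 2 = 6 := Real.sq_sqrt (by norm_num)
  have hq : √(2 * p * (1 - p)) ^ 2 = 2 * p * (1 - p) := Real.sq_sqrt (by nlinarith)
  have hq₀ : 0 ≤ √(2 * p * (1 - p)) := Real.sqrt_nonneg _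
  have hs₂ := two_lt_sqrt_six
  nlinarith [sq_nonneg (6 * p - 3 - √6),
    sq_nonneg (2 * √(2 * p * (1 - p)) - (2 + √6 - 4 * p))]

lemma sqrt_two_mul_mul_one_sub_at_optimum :
    √(2 * (1 / 2 + √6 / 6) * (1 - (1 / 2 + √6 / 6))) = √6 / 6 := by
  have hs : √6 ^ 2 = 6 := Real.sq_sqrt (by norm_num)
  rw [show 2 * (1 / 2 + √6 / 6) * (1 - (1 / 2 + √6 / 6)) = (√6 / 6) ^ 2 by nlinarith]
  exact Real.sqrt_sq (by positivity)

theorem stmt_10 (μ : ℝ) (hμ : 0 < μ) :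
    IsLeast
        {y : ℝ | ∃ p ∈ Set.Icc (0 : ℝ) 1,
          y = p * (2 * μ) + (1 - p) * (10 * μ) - 4 * μ * Real.sqrt (2 * p * (1 - p))}
        ((6 - 2 * Real.sqrt 6) * μ)
    ∧ (6 - 2 * Real.sqrt 6) * μ < 2 * μ := by
  have hs₂ := two_lt_sqrt_six
  have hs₃ := sqrt_six_lt_three
  refine ⟨⟨⟨1 / 2 + √6 / 6, ⟨by linarith, by linarith⟩, ?_⟩, ?_⟩, by nlinarith⟩
  · rw [sqrt_two_mul_mul_one_sub_at_optimum]
    ring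
  · rintro y ⟨p, ⟨hp₀, hp₁⟩, rfl⟩
    have h := mul_le_mul_of_nonneg_left (two_mul_sqrt_two_mul_mul_one_sub_le hp₀ hp₁) hμ.le
    linarith
end

section
/- The product of the minimal Fisher information (6 − 2√6)·μ of the superposition √(p_min)·ψ_0 + √(1−p_min)·ψ_2 (with p_min = 1/2 + 1/√6) and its risk μ^{−1}·(3/2 − 1/√6) equals 11 − 4√6, and 11 − 4√6 > 1; hence at fixed risk this superposition carries more Fisher information than the ground state, for which I_F[ψ_0] · risk(ψ_0) = 1. -/
open Real

lemma fisher_mul_risk_coeff_eq :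
    (6 - 2 * √6) * (3 / 2 - 1 / √6) = 11 - 4 * √6 := by
  have h6 : √6 ^ 2 = 6 := sq_sqrt (by norm_num)
  have h6pos : 0 < √6 := sqrt_pos.mpr (by norm_num)
  field_simp
  nlinarith [h6]

lemma one_lt_eleven_sub_four_mul_sqrt_six : (1 : ℝ) < 11 - 4 * √6 := by
  have h6 : √6 < 5 / 2 := (sqrt_lt' (by norm_num)).mpr (by norm_num)
  linarith

theorem stmt_12 (μ : ℝ) (hμ : 0 < μ) :
    ((6 - 2 * Real.sqrt 6) * μ) * (μ⁻¹ * (3 / 2 - 1 / Real.sqrt 6)) = 11 - 4 * Real.sqrt 6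
    ∧ (1 : ℝ) < 11 - 4 * Real.sqrt 6
    ∧ (2 * μ) * ((2 * μ)⁻¹) = 1 := by
  refine ⟨?_, one_lt_eleven_sub_four_mul_sqrt_six, mul_inv_cancel₀ (by positivity)⟩
  rw [mul_assoc, mul_inv_cancel_left₀ hμ.ne', fisher_mul_risk_coeff_eq]
end

section
/- For every x ∈ ℝ and t ∈ (−1,1), the generating function of squared physicists' Hermite polynomials satisfies Σ_{n=0}^{∞} (H_n(x)²/(2^n·n!))·t^n = (1 − t²)^{−1/2}·exp(2x²t/(1+t)). -/
open Real

lemma hermiteH_succ_succ (x : ℝ) (n : ℕ) :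
    hermiteH (n + 2) x = 2 * x * hermiteH (n + 1) x - 2 * ((n : ℝ) + 1) * hermiteH n x := by
  simp [hermiteH]

noncomputable def tt (n : ℕ) : ℝ := Real.sqrt (2 ^ n * n.factorial)

noncomputable def ss (n : ℕ) : ℝ := ∑ k ∈ Finset.range n, 1 / Real.sqrt (k + 1)

lemma tt_pos (n : ℕ) : 0 < tt n := Real.sqrt_pos.2 (by positivity)

lemma tt_succ (n : ℕ) : tt (n + 1) = tt n * Real.sqrt (2 * (n + 1)) := by
  rw [tt, tt, ← Real.sqrt_mul (by positivity)]
  congr 1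
  rw [pow_succ, Nat.factorial_succ]
  push_cast
  ring

lemma ss_succ (n : ℕ) : ss (n + 1) = ss n + 1 / Real.sqrt (n + 1) := by
  rw [ss, ss, Finset.sum_range_succ]

lemma ss_nonneg (n : ℕ) : 0 ≤ ss n := Finset.sum_nonneg fun k _ => by positivity

lemma ss_mono (n : ℕ) : ss n ≤ ss (n + 1) := by
  rw [ss_succ]
  have : (0:ℝ) ≤ 1 / Real.sqrt (n + 1) := by positivity
  linarith

lemma ss_le (n : ℕ) : ss n ≤ 2 * Real.sqrt n := by
  induction n with
  | zero => simp [ss]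
  | succ n ih =>
    rw [ss_succ]
    have hv : (0:ℝ) < Real.sqrt ((n:ℝ) + 1) := Real.sqrt_pos.2 (by positivity)
    have hu : (0:ℝ) ≤ Real.sqrt n := Real.sqrt_nonneg _
    have hu2 : Real.sqrt (n:ℝ) ^ 2 = n := Real.sq_sqrt (by positivity)
    have hv2 : Real.sqrt ((n:ℝ) + 1) ^ 2 = (n:ℝ) + 1 := Real.sq_sqrt (by positivity)
    have key : 1 / Real.sqrt ((n:ℝ) + 1) ≤ 2 * Real.sqrt ((n:ℝ)+1) - 2 * Real.sqrt (n:ℝ) := by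
      rw [div_le_iff₀ hv]
      nlinarith [sq_nonneg (Real.sqrt (n:ℝ) - Real.sqrt ((n:ℝ)+1))]
    push_cast
    linarith

lemma tt_succ' (m : ℕ) : tt (m + 2) = tt (m + 1) * Real.sqrt (2 * ((m:ℝ) + 2)) := by
  have h := tt_succ (m + 1)
  push_cast at h
  rwa [show ((2:ℝ) * ((m:ℝ) + 1 + 1)) = 2 * ((m:ℝ) + 2) by ring] at h

lemma hermite_bound (x : ℝ) (n : ℕ) :
    |hermiteH n x| ≤ tt n * Real.exp (Real.sqrt 2 * |x| * ss n) := by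
  set c := Real.sqrt 2 * |x| with hc
  have hc0 : 0 ≤ c := by positivity
  have hsq : Real.sqrt 2 * Real.sqrt 2 = 2 := Real.mul_self_sqrt (by norm_num)
  suffices h : ∀ m, |hermiteH m x| ≤ tt m * Real.exp (c * ss m) ∧
      |hermiteH (m+1) x| ≤ tt (m+1) * Real.exp (c * ss (m+1)) from (h n).1
  intro m
  induction m with
  | zero =>
    constructor
    · have h0 : hermiteH 0 x = 1 := rfl
      have : tt 0 = 1 := by simp [tt]
      simp [h0, this, ss]
    · have h1 : hermiteH 1 x = 2 * x := rfl
      have ht1 : tt 1 = Real.sqrt 2 := by simp [tt]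
      have hs1 : ss 1 = 1 := by simp [ss]
      rw [h1, ht1, hs1, mul_one]
      have hexp : c + 1 ≤ Real.exp c := Real.add_one_le_exp c
      have h2 : |2 * x| = 2 * |x| := by rw [abs_mul]; norm_num
      have h3 : 2 * |x| = Real.sqrt 2 * c := by rw [hc, ← mul_assoc, hsq]
      rw [h2, h3]
      have := Real.sqrt_nonneg 2
      nlinarith
  | succ m ih =>
    obtain ⟨ih0, ih1⟩ := ih
    refine ⟨ih1, ?_⟩
    show |hermiteH (m+2) x| ≤ tt (m+2) * Real.exp (c * ss (m+2))
    set E0 := Real.exp (c * ss m) with hE0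
    set E1 := Real.exp (c * ss (m+1)) with hE1
    set E2 := Real.exp (c * ss (m+2)) with hE2
    have hE0pos : 0 < E0 := Real.exp_pos _
    have hE1pos : 0 < E1 := Real.exp_pos _
    have hsm2 : (0:ℝ) < Real.sqrt ((m:ℝ)+2) := Real.sqrt_pos.2 (by positivity)
    set d := c / Real.sqrt ((m:ℝ)+2) with hd
    have hd0 : 0 ≤ d := by positivity
    have h1 : |hermiteH (m+2) x| ≤ 2 * |x| * |hermiteH (m+1) x| + 2*((m:ℝ)+1) * |hermiteH m x| := by
      calc |hermiteH (m+2) x|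
          = |2 * x * hermiteH (m+1) x - 2 * ((m:ℝ)+1) * hermiteH m x| := by
            rw [hermiteH_succ_succ]
        _ ≤ |2 * x * hermiteH (m+1) x| + |2 * ((m:ℝ)+1) * hermiteH m x| := abs_sub _ _
        _ = 2 * |x| * |hermiteH (m+1) x| + 2*((m:ℝ)+1) * |hermiteH m x| := by
            rw [abs_mul, abs_mul, abs_mul, abs_mul, abs_two,
              abs_of_nonneg (show (0:ℝ) ≤ (m:ℝ)+1 by positivity)]
    have hA' : tt (m+2) * c = 2 * |x| * tt (m+1) * Real.sqrt ((m:ℝ)+2) := by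
      rw [tt_succ' m, Real.sqrt_mul (by norm_num : (0:ℝ) ≤ 2), hc]
      linear_combination (tt (m+1) * |x| * Real.sqrt ((m:ℝ)+2)) * hsq
    have hA : tt (m+2) * d = 2 * |x| * tt (m+1) := by
      rw [hd, mul_div_assoc'] at *
      rw [hA', mul_div_cancel_right₀ _ hsm2.ne']
    have hB : 2*((m:ℝ)+1) * tt m ≤ tt (m+2) := by
      have e : tt (m+2) = tt m * Real.sqrt ((2*((m:ℝ)+1)) * (2*((m:ℝ)+2))) := by
        rw [tt_succ' m, tt_succ m, Real.sqrt_mul (by positivity : (0:ℝ) ≤ 2*((m:ℝ)+1))]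
        ring
      have h4 : ((2:ℝ)*((m:ℝ)+1)) * (2*((m:ℝ)+1)) ≤ (2 * ((m:ℝ) + 1)) * (2 * ((m:ℝ) + 2)) := by
        nlinarith [Nat.cast_nonneg (α := ℝ) m]
      rw [e]
      calc 2*((m:ℝ)+1) * tt m = tt m * Real.sqrt ((2*((m:ℝ)+1)) * (2*((m:ℝ)+1))) := by
            rw [Real.sqrt_mul_self (by positivity)]; ring
        _ ≤ tt m * Real.sqrt ((2 * ((m:ℝ) + 1)) * (2 * ((m:ℝ) + 2))) := by
            have := Real.sqrt_le_sqrt h4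
            exact mul_le_mul_of_nonneg_left this (tt_pos m).le
    have hE2ge : E1 * (1 + d) ≤ E2 := by
      have : E2 = E1 * Real.exp d := by
        rw [hE1, hE2, ss_succ (m+1), ← Real.exp_add]
        congr 1
        rw [hd]
        push_cast
        ring
      rw [this]
      have := Real.add_one_le_exp d
      nlinarith
    have hE01 : E0 ≤ E1 :=
      Real.exp_le_exp.2 (mul_le_mul_of_nonneg_left (ss_mono m) hc0)
    calc |hermiteH (m+2) x|
        ≤ 2 * |x| * |hermiteH (m+1) x| + 2*((m:ℝ)+1) * |hermiteH m x| := h1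
      _ ≤ 2 * |x| * (tt (m+1) * E1) + 2*((m:ℝ)+1) * (tt m * E0) := by
          have t1 := mul_le_mul_of_nonneg_left ih1 (by positivity : (0:ℝ) ≤ 2 * |x|)
          have t2 := mul_le_mul_of_nonneg_left ih0 (by positivity : (0:ℝ) ≤ 2*((m:ℝ)+1))
          linarith
      _ ≤ tt (m+2) * d * E1 + tt (m+2) * E1 := by
          have e1 : 2 * |x| * (tt (m+1) * E1) = tt (m+2) * d * E1 := by linear_combination E1 * hA.symm
          have e2 : 2*((m:ℝ)+1) * (tt m * E0) ≤ tt (m+2) * E1 := by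
            calc 2*((m:ℝ)+1) * (tt m * E0) = (2*((m:ℝ)+1) * tt m) * E0 := by ring
              _ ≤ tt (m+2) * E0 := mul_le_mul_of_nonneg_right hB hE0pos.le
              _ ≤ tt (m+2) * E1 := mul_le_mul_of_nonneg_left hE01 (tt_pos _).le
          linarith
      _ = tt (m+2) * (E1 * (1 + d)) := by ring
      _ ≤ tt (m+2) * E2 := mul_le_mul_of_nonneg_left hE2ge (tt_pos _).le

noncomputable def aa (x : ℝ) (n : ℕ) : ℝ := hermiteH n x ^ 2 / (2 ^ n * (n.factorial : ℝ))

lemma denom_pos (n : ℕ) : (0 : ℝ) < 2 ^ n * (n.factorial : ℝ) := by positivity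

lemma aa_nonneg (x : ℝ) (n : ℕ) : 0 ≤ aa x n := by
  rw [aa]; positivity

lemma aa_le_exp (x : ℝ) (n : ℕ) :
    aa x n ≤ Real.exp (2 * (Real.sqrt 2 * |x|) * ss n) := by
  set c := Real.sqrt 2 * |x| with hc
  have hb := hermite_bound x n
  have htt : tt n ^ 2 = 2 ^ n * (n.factorial : ℝ) := Real.sq_sqrt (by positivity)
  have h2 : hermiteH n x ^ 2 ≤ (2 ^ n * (n.factorial : ℝ)) * Real.exp (2 * c * ss n) := by
    have : hermiteH n x ^ 2 = |hermiteH n x| ^ 2 := (sq_abs _).symm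
    rw [this, ← htt]
    have he : Real.exp (c * ss n) ^ 2 = Real.exp (2 * c * ss n) := by
      rw [sq, ← Real.exp_add]; ring_nf
    calc |hermiteH n x| ^ 2 ≤ (tt n * Real.exp (c * ss n)) ^ 2 := by
          have h0 : 0 ≤ |hermiteH n x| := abs_nonneg _
          nlinarith [Real.exp_pos (c * ss n), (tt_pos n).le]
      _ = tt n ^ 2 * Real.exp (2 * c * ss n) := by rw [mul_pow, he]
  rw [aa, div_le_iff₀ (denom_pos n)]
  linarith [h2]

lemma aa_le_sqrt (x : ℝ) (n : ℕ) :
    aa x n ≤ Real.exp ((4 * (Real.sqrt 2 * |x|)) * Real.sqrt n) := by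
  refine (aa_le_exp x n).trans ?_
  rw [Real.exp_le_exp]
  have h1 : ss n ≤ 2 * Real.sqrt n := ss_le n
  have hc : 0 ≤ Real.sqrt 2 * |x| := by positivity
  nlinarith

lemma aa_le_shift (x : ℝ) (n : ℕ) :
    aa x n ≤ Real.exp ((4 * (Real.sqrt 2 * |x|)) * Real.sqrt ((n:ℝ)+1)) ∧
    aa x (n+1) ≤ Real.exp ((4 * (Real.sqrt 2 * |x|)) * Real.sqrt ((n:ℝ)+1)) := by
  have hc : 0 ≤ 4 * (Real.sqrt 2 * |x|) := by positivity
  have hm : Real.sqrt (n:ℝ) ≤ Real.sqrt ((n:ℝ)+1) := Real.sqrt_le_sqrt (by linarith)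
  constructor
  · refine (aa_le_sqrt x n).trans ?_
    rw [Real.exp_le_exp]
    nlinarith [Real.sqrt_nonneg (n:ℝ)]
  · have := aa_le_sqrt x (n+1)
    push_cast at this
    exact this

lemma summable_master {K r : ℝ} (hK : 0 ≤ K) (hr : |r| < 1) :
    Summable (fun n : ℕ => ((n:ℝ)+1) * Real.exp (K * Real.sqrt ((n:ℝ)+1)) * |r| ^ n) := by
  rcases eq_or_ne r 0 with h0 | h0
  · apply summable_of_ne_finset_zero (s := ({0} : Finset ℕ))
    intro n hn
    have hn0 : n ≠ 0 := by simpa using hn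
    simp [h0, zero_pow hn0]
  · have hr0 : 0 < |r| := abs_pos.2 h0
    set ε := -Real.log |r| / 2 with hε
    have hlog : Real.log |r| < 0 := Real.log_neg hr0 hr
    have hεpos : 0 < ε := by rw [hε]; linarith
    set q := Real.exp ε * |r| with hq
    have hq0 : 0 ≤ q := by positivity
    have hq1 : q < 1 := by
      have e1 : q = Real.exp (ε + Real.log |r|) := by
        rw [Real.exp_add, Real.exp_log hr0, hq]
      rw [e1]
      exact Real.exp_lt_one_iff.mpr (by rw [hε]; linarith)
    set C := Real.exp (K ^ 2 / (4 * ε) + ε) with hC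
    have hCpos : 0 < C := Real.exp_pos _
    have hsum : Summable (fun n : ℕ => C * (((n:ℝ)+1) * q ^ n)) := by
      apply Summable.mul_left
      have h1 : Summable (fun n : ℕ => (n:ℝ) ^ 1 * q ^ n) :=
        summable_pow_mul_geometric_of_norm_lt_one 1
          (by rwa [Real.norm_eq_abs, abs_of_nonneg hq0])
      have h2 : Summable (fun n : ℕ => q ^ n) :=
        summable_geometric_of_lt_one hq0 hq1
      have := h1.add h2
      refine this.congr fun n => ?_
      push_cast
      ring
    refine Summable.of_nonneg_of_le (fun n => by positivity) (fun n => ?_) hsum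
    have key : K * Real.sqrt ((n:ℝ)+1) ≤ ε * ((n:ℝ)+1) + K ^ 2 / (4 * ε) := by
      have hu : 0 ≤ Real.sqrt ((n:ℝ)+1) := Real.sqrt_nonneg _
      have hu2 : Real.sqrt ((n:ℝ)+1) ^ 2 = (n:ℝ)+1 := Real.sq_sqrt (by positivity)
      have hD : K ^ 2 / (4 * ε) * (4 * ε) = K ^ 2 :=
        div_mul_cancel₀ _ (by positivity : (4 * ε : ℝ) ≠ 0)
      have expand : (2*ε*Real.sqrt ((n:ℝ)+1) - K)^2
          = 4*ε^2*((n:ℝ)+1) - 4*ε*(K*Real.sqrt ((n:ℝ)+1)) + K^2 := by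
        linear_combination (4*ε^2) * hu2
      have hsq : 0 ≤ 4*ε^2*((n:ℝ)+1) - 4*ε*(K*Real.sqrt ((n:ℝ)+1)) + K^2 :=
        expand ▸ sq_nonneg _
      have h4 : 4 * ε * (K * Real.sqrt ((n:ℝ)+1))
          ≤ 4 * ε * (ε * ((n:ℝ)+1) + K ^ 2 / (4 * ε)) := by
        nlinarith [hsq, hD]
      exact le_of_mul_le_mul_left h4 (by positivity)
    have hexp : Real.exp (K * Real.sqrt ((n:ℝ)+1)) ≤
        Real.exp (K ^ 2 / (4 * ε) + ε) * Real.exp ε ^ n := by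
      rw [← Real.exp_nat_mul, ← Real.exp_add]
      apply Real.exp_le_exp.2
      push_cast
      linarith
    calc ((n:ℝ)+1) * Real.exp (K * Real.sqrt ((n:ℝ)+1)) * |r| ^ n
        ≤ ((n:ℝ)+1) * (Real.exp (K ^ 2 / (4 * ε) + ε) * Real.exp ε ^ n) * |r| ^ n := by
          have hn1 : (0:ℝ) ≤ (n:ℝ)+1 := by positivity
          have hrn : (0:ℝ) ≤ |r| ^ n := by positivity
          exact mul_le_mul_of_nonneg_right
            (mul_le_mul_of_nonneg_left hexp hn1) hrn
      _ = C * (((n:ℝ)+1) * q ^ n) := by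
          rw [hC, hq, mul_pow]
          ring

lemma summable_aa_mul (x : ℝ) {r : ℝ} (hr : |r| < 1) :
    Summable (fun n => aa x n * r ^ n) := by
  apply Summable.of_abs
  refine Summable.of_nonneg_of_le (fun n => abs_nonneg _) (fun n => ?_)
    (summable_master (by positivity : (0:ℝ) ≤ 4 * (Real.sqrt 2 * |x|)) hr)
  rw [abs_mul, abs_pow, abs_of_nonneg (aa_nonneg x n)]
  have h1 := (aa_le_shift x n).1
  have hn1 : (1:ℝ) ≤ (n:ℝ)+1 := by
    have : (0:ℝ) ≤ (n:ℝ) := by positivity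
    linarith
  have hrn : (0:ℝ) ≤ |r| ^ n := by positivity
  have hEpos := Real.exp_pos ((4 * (Real.sqrt 2 * |x|)) * Real.sqrt ((n:ℝ)+1))
  calc aa x n * |r| ^ n ≤ Real.exp ((4 * (Real.sqrt 2 * |x|)) * Real.sqrt ((n:ℝ)+1)) * |r| ^ n :=
        mul_le_mul_of_nonneg_right h1 hrn
    _ = 1 * Real.exp ((4 * (Real.sqrt 2 * |x|)) * Real.sqrt ((n:ℝ)+1)) * |r| ^ n := by ring
    _ ≤ ((n:ℝ)+1) * Real.exp ((4 * (Real.sqrt 2 * |x|)) * Real.sqrt ((n:ℝ)+1)) * |r| ^ n :=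
        mul_le_mul_of_nonneg_right (mul_le_mul_of_nonneg_right hn1 hEpos.le) hrn

lemma summable_aa_deriv (x : ℝ) {r : ℝ} (hr : |r| < 1) :
    Summable (fun n : ℕ => ((n:ℝ)+1) * aa x (n+1) * r ^ n) := by
  apply Summable.of_abs
  refine Summable.of_nonneg_of_le (fun n => abs_nonneg _) (fun n => ?_)
    (summable_master (by positivity : (0:ℝ) ≤ 4 * (Real.sqrt 2 * |x|)) hr)
  rw [abs_mul, abs_mul, abs_pow, abs_of_nonneg (aa_nonneg x (n+1)),
    abs_of_nonneg (show (0:ℝ) ≤ (n:ℝ)+1 by positivity)]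
  have h1 := (aa_le_shift x n).2
  have hrn : (0:ℝ) ≤ |r| ^ n := by positivity
  have hn1 : (0:ℝ) ≤ (n:ℝ)+1 := by positivity
  exact mul_le_mul_of_nonneg_right (mul_le_mul_of_nonneg_left h1 hn1) hrn

lemma hermite_sq_rec (x : ℝ) (m : ℕ) :
    hermiteH (m + 3) x ^ 2
      = (4 * x ^ 2 - 2 * (m : ℝ) - 4) * hermiteH (m + 2) x ^ 2
        + 4 * ((m : ℝ) + 2) * ((m : ℝ) + 2 - 2 * x ^ 2) * hermiteH (m + 1) x ^ 2
        + 8 * ((m : ℝ) + 1) ^ 2 * ((m : ℝ) + 2) * hermiteH m x ^ 2 := by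
  have h3 := hermiteH_succ_succ x (m + 1)
  have h2 := hermiteH_succ_succ x m
  rw [show m + 1 + 2 = m + 3 from rfl] at h3
  push_cast at h3
  rw [h3, h2]
  ring

lemma aa_mul (x : ℝ) (n : ℕ) :
    hermiteH n x ^ 2 = aa x n * (2 ^ n * (n.factorial : ℝ)) :=
  (div_mul_cancel₀ _ (denom_pos n).ne').symm

lemma fac_cast_succ (m k : ℕ) :
    (((m + k + 1).factorial : ℝ)) = ((m : ℝ) + k + 1) * ((m + k).factorial : ℝ) := by
  rw [Nat.factorial_succ]
  push_cast
  ring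

lemma aa_rec (x : ℝ) (m : ℕ) :
    ((m : ℝ) + 3) * aa x (m + 3)
      = (2 * x ^ 2 - (m : ℝ) - 2) * aa x (m + 2) + ((m : ℝ) + 2 - 2 * x ^ 2) * aa x (m + 1)
        + ((m : ℝ) + 1) * aa x m := by
  have key := hermite_sq_rec x m
  rw [aa_mul x (m + 3), aa_mul x (m + 2), aa_mul x (m + 1), aa_mul x m] at key
  rw [show m + 3 = m + 2 + 1 from rfl, fac_cast_succ m 2, show m + 2 = m + 1 + 1 from rfl,
    fac_cast_succ m 1, show m + 1 = m + 0 + 1 from rfl, fac_cast_succ m 0] at key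
  rw [pow_succ, pow_succ, pow_succ] at key
  push_cast at key
  norm_num at key
  have hb : (8 * (2:ℝ) ^ m * ((m : ℝ) + 2) * ((m : ℝ) + 1) * (m.factorial : ℝ)) ≠ 0 := by
    positivity
  apply mul_right_cancel₀ hb
  linear_combination key

noncomputable def ff (x : ℝ) : ℝ → ℝ := fun t => ∑' n, aa x n * t ^ n

noncomputable def dd (x : ℝ) : ℝ → ℝ := fun t => ∑' n : ℕ, ((n:ℝ)+1) * aa x (n+1) * t ^ n

lemma hasDerivAt_ff (x : ℝ) {t : ℝ} (h : |t| < 1) : HasDerivAt (ff x) (dd x t) t := by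
  set r := (1 + |t|) / 2 with hrdef
  have htr : |t| < r := by rw [hrdef]; linarith
  have hr1 : r < 1 := by rw [hrdef]; linarith
  have hr0 : 0 ≤ r := by rw [hrdef]; positivity
  have hrabs : |r| < 1 := by rwa [abs_of_nonneg hr0]
  set s := Metric.ball (0:ℝ) r with hs
  have hso : IsOpen s := Metric.isOpen_ball
  have hts : t ∈ s := by simpa [hs, Real.dist_eq] using htr
  have hmem : ∀ y ∈ s, |y| < r := by
    intro y hy
    simpa [hs, Real.dist_eq] using hy
  -- the partial sums and their derivatives
  set F : ℕ → ℝ → ℝ := fun N y => ∑ n ∈ Finset.range (N+1), aa x n * y ^ n with hF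
  set F' : ℕ → ℝ → ℝ := fun N y => ∑ n ∈ Finset.range N, ((n:ℝ)+1) * aa x (n+1) * y ^ n with hF'
  apply hasDerivAt_of_tendstoUniformlyOn (l := Filter.atTop) hso (f := F) (f' := F') ?uniform ?derivs ?conv hts
  case uniform =>
    have hu : Summable (fun n : ℕ => ((n:ℝ)+1) * aa x (n+1) * r ^ n) := summable_aa_deriv x hrabs
    exact tendstoUniformlyOn_tsum_nat hu (fun n y hy => by
      have hy' := (hmem y hy).le
      rw [Real.norm_eq_abs, abs_mul, abs_mul, abs_pow,
        abs_of_nonneg (show (0:ℝ) ≤ (n:ℝ)+1 by positivity), abs_of_nonneg (aa_nonneg x (n+1))]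
      have : |y| ^ n ≤ r ^ n := pow_le_pow_left₀ (abs_nonneg y) hy' n
      have hnn : (0:ℝ) ≤ ((n:ℝ)+1) * aa x (n+1) := by
        have := aa_nonneg x (n+1); positivity
      exact mul_le_mul_of_nonneg_left this hnn)
  case derivs =>
    apply Filter.Eventually.of_forall
    intro N y hy
    have : HasDerivAt (fun z => ∑ n ∈ Finset.range (N+1), aa x n * z ^ n)
        (∑ n ∈ Finset.range (N+1), aa x n * ((n:ℝ) * y ^ (n-1))) y := by
      apply HasDerivAt.fun_sum
      intro n _
      exact (hasDerivAt_pow n y).const_mul (aa x n)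
    refine this.congr_deriv ?_
    rw [hF', Finset.sum_range_succ' (fun n => aa x n * ((n:ℝ) * y ^ (n-1))) N]
    simp only [Nat.cast_zero, zero_mul, mul_zero, add_zero, Nat.cast_add, Nat.cast_one,
      Nat.add_sub_cancel]
    apply Finset.sum_congr rfl
    intro n _
    push_cast
    ring
  case conv =>
    intro y hy
    have hsum : Summable (fun n : ℕ => aa x n * y ^ n) :=
      summable_aa_mul x ((hmem y hy).trans hr1)
    have := hsum.hasSum.tendsto_sum_nat
    exact this.comp (Filter.tendsto_add_atTop_nat 1)

def shf (w : ℕ → ℝ) : ℕ → ℝ := fun n => Nat.rec 0 (fun k _ => w k) n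

@[simp] lemma shf_zero (w : ℕ → ℝ) : shf w 0 = 0 := rfl

@[simp] lemma shf_succ (w : ℕ → ℝ) (n : ℕ) : shf w (n+1) = w n := rfl

lemma shf_summable {w : ℕ → ℝ} (hw : Summable w) : Summable (shf w) := by
  have : Summable (fun n => shf w (n+1)) := hw
  exact (summable_nat_add_iff 1).mp this

lemma shf_tsum {w : ℕ → ℝ} (hw : Summable w) : ∑' n, w n = ∑' n, shf w n := by
  rw [Summable.tsum_eq_zero_add (shf_summable hw)]
  simp

lemma ode (x : ℝ) {t : ℝ} (ht1 : |t| < 1) :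
    (1 + t - t^2 - t^3) * dd x t = (2*x^2 + (1 - 2*x^2)*t + t^2) * ff x t := by
  have Sc : Summable (fun n : ℕ => (((n:ℝ)+1) * aa x (n+1)) * t^n) := by
    refine (summable_aa_deriv x ht1).congr fun n => by ring
  have Sb : Summable (fun n : ℕ => aa x n * t^n) := summable_aa_mul x ht1
  have Sw1 : Summable (fun n : ℕ => (((n:ℝ)+1) * aa x (n+1)) * t^(n+1)) := by
    refine (Sc.mul_right t).congr fun n => by rw [pow_succ]; ring
  have Sw2 : Summable (fun n : ℕ => (((n:ℝ)+1) * aa x (n+1)) * t^(n+2)) := by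
    refine (Sc.mul_right (t^2)).congr fun n => by rw [pow_add]; ring
  have Sw3 : Summable (fun n : ℕ => (((n:ℝ)+1) * aa x (n+1)) * t^(n+3)) := by
    refine (Sc.mul_right (t^3)).congr fun n => by rw [pow_add]; ring
  have Sv1 : Summable (fun n : ℕ => aa x n * t^(n+1)) := by
    refine (Sb.mul_right t).congr fun n => by rw [pow_succ]; ring
  have Sv2 : Summable (fun n : ℕ => aa x n * t^(n+2)) := by
    refine (Sb.mul_right (t^2)).congr fun n => by rw [pow_add]; ring
  -- expansion of LHS
  have e1 : ∑' n : ℕ, (((n:ℝ)+1) * aa x (n+1)) * t^(n+1) = t * dd x t := by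
    simp only [dd, ff]
    rw [← tsum_mul_left]
    exact tsum_congr fun n => by rw [pow_succ]; ring
  have e2 : ∑' n : ℕ, (((n:ℝ)+1) * aa x (n+1)) * t^(n+2) = t^2 * dd x t := by
    simp only [dd, ff]
    rw [← tsum_mul_left]
    exact tsum_congr fun n => by rw [pow_add]; ring
  have e3 : ∑' n : ℕ, (((n:ℝ)+1) * aa x (n+1)) * t^(n+3) = t^3 * dd x t := by
    simp only [dd, ff]
    rw [← tsum_mul_left]
    exact tsum_congr fun n => by rw [pow_add]; ring
  have f1 : ∑' n : ℕ, aa x n * t^(n+1) = t * ff x t := by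
    simp only [dd, ff]
    rw [← tsum_mul_left]
    exact tsum_congr fun n => by rw [pow_succ]; ring
  have f2 : ∑' n : ℕ, aa x n * t^(n+2) = t^2 * ff x t := by
    simp only [dd, ff]
    rw [← tsum_mul_left]
    exact tsum_congr fun n => by rw [pow_add]; ring
  have f0 : ∑' n : ℕ, (2*x^2) * (aa x n * t^n) = (2*x^2) * ff x t := by
    simp only [ff]
    exact tsum_mul_left
  -- rewrite everything through shifts
  set W1 := shf (fun n : ℕ => (((n:ℝ)+1) * aa x (n+1)) * t^(n+1)) with hW1
  set W2 := shf (shf (fun n : ℕ => (((n:ℝ)+1) * aa x (n+1)) * t^(n+2))) with hW2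
  set W3 := shf (shf (shf (fun n : ℕ => (((n:ℝ)+1) * aa x (n+1)) * t^(n+3)))) with hW3
  set V1 := shf (fun n : ℕ => aa x n * t^(n+1)) with hV1
  set V2 := shf (shf (fun n : ℕ => aa x n * t^(n+2))) with hV2
  have SW1 : Summable W1 := shf_summable Sw1
  have SW2 : Summable W2 := shf_summable (shf_summable Sw2)
  have SW3 : Summable W3 := shf_summable (shf_summable (shf_summable Sw3))
  have SV1 : Summable V1 := shf_summable Sv1
  have SV2 : Summable V2 := shf_summable (shf_summable Sv2)
  have tW1 : ∑' n, W1 n = t * dd x t := by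
    rw [hW1, ← shf_tsum Sw1, e1]
  have tW2 : ∑' n, W2 n = t^2 * dd x t := by
    rw [hW2, ← shf_tsum (shf_summable Sw2), ← shf_tsum Sw2, e2]
  have tW3 : ∑' n, W3 n = t^3 * dd x t := by
    rw [hW3, ← shf_tsum (shf_summable (shf_summable Sw3)),
      ← shf_tsum (shf_summable Sw3), ← shf_tsum Sw3, e3]
  have tV1 : ∑' n, V1 n = t * ff x t := by
    rw [hV1, ← shf_tsum Sv1, f1]
  have tV2 : ∑' n, V2 n = t^2 * ff x t := by
    rw [hV2, ← shf_tsum (shf_summable Sv2), ← shf_tsum Sv2, f2]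
  -- combine
  have hLHS : (1 + t - t^2 - t^3) * dd x t
      = ∑' n : ℕ, ((((n:ℝ)+1) * aa x (n+1)) * t^n + W1 n - W2 n - W3 n) := by
    rw [Summable.tsum_sub ((Sc.add SW1).sub SW2) SW3, Summable.tsum_sub (Sc.add SW1) SW2, Summable.tsum_add Sc SW1,
      tW1, tW2, tW3]
    have : dd x t = ∑' n : ℕ, (((n:ℝ)+1) * aa x (n+1)) * t^n := rfl
    rw [← this]
    ring
  have hRHS : (2*x^2 + (1 - 2*x^2)*t + t^2) * ff x t
      = ∑' n : ℕ, ((2*x^2) * (aa x n * t^n) + (1 - 2*x^2) * V1 n + V2 n) := by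
    rw [Summable.tsum_add ((Sb.mul_left (2*x^2)).add (SV1.mul_left (1 - 2*x^2))) SV2,
      Summable.tsum_add (Sb.mul_left (2*x^2)) (SV1.mul_left (1 - 2*x^2)), f0,
      tsum_mul_left, tV1, tV2]
    ring
  rw [hLHS, hRHS]
  -- coefficientwise identity
  apply tsum_congr
  intro n
  have aa0 : aa x 0 = 1 := by simp [aa, hermiteH]
  have aa1 : aa x 1 = 2 * x^2 := by
    have h1 : hermiteH 1 x = 2 * x := rfl
    rw [aa, h1]
    norm_num
    ring
  have aa2 : aa x 2 = (4*x^2 - 2)^2 / 8 := by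
    have h2 : hermiteH 2 x = 4*x^2 - 2 := by
      rw [hermiteH_succ_succ x 0]
      have h1 : hermiteH 1 x = 2 * x := rfl
      have h0 : hermiteH 0 x = 1 := rfl
      rw [h1, h0]
      push_cast
      ring
    rw [aa, h2]
    norm_num
  match n with
  | 0 => simp [hW1, hW2, hW3, hV1, hV2, aa0, aa1]
  | 1 =>
    simp only [hW1, hW2, hW3, hV1, hV2, shf_succ, shf_zero]
    rw [aa0, aa1, aa2]
    ring
  | 2 =>
    simp only [hW1, hW2, hW3, hV1, hV2, shf_succ, shf_zero]
    have hr := aa_rec x 0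
    push_cast at hr
    norm_num at hr
    rw [aa0, aa1] at hr ⊢
    linear_combination (t^2) * hr
  | (k+3) =>
    simp only [hW1, hW2, hW3, hV1, hV2, shf_succ, shf_zero]
    have hr := aa_rec x (k+1)
    push_cast at hr ⊢
    norm_num at hr ⊢
    linear_combination (t^(k+3)) * hr

lemma ff_zero (x : ℝ) : ff x 0 = 1 := by
  rw [ff]
  rw [tsum_eq_single 0 (fun n hn => by simp [zero_pow hn])]
  simp [aa, hermiteH]

noncomputable def GG (x : ℝ) : ℝ → ℝ :=
  fun s => (1 - s^2) ^ ((1:ℝ)/2) * Real.exp (-(2*x^2*s/(1+s)))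

lemma GG_zero (x : ℝ) : GG x 0 = 1 := by
  simp [GG]

lemma GG_pos (x : ℝ) {s : ℝ} (hs : s ∈ Set.Ioo (-1:ℝ) 1) : 0 < GG x s := by
  obtain ⟨h1, h2⟩ := hs
  have hb : 0 < 1 - s^2 := by nlinarith
  exact mul_pos (Real.rpow_pos_of_pos hb _) (Real.exp_pos _)

lemma hasDerivAt_N (x : ℝ) {s : ℝ} (hs : s ∈ Set.Ioo (-1:ℝ) 1) :
    HasDerivAt (fun y => ff x y * GG x y) 0 s := by
  obtain ⟨hm1, h1'⟩ := hs
  have hb : 0 < 1 - s^2 := by nlinarith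
  have hp : 0 < 1 + s := by linarith
  have habs : |s| < 1 := abs_lt.2 ⟨hm1, h1'⟩
  -- derivative of u = 2x^2 s / (1+s)
  have hnum : HasDerivAt (fun y : ℝ => 2*x^2*y) (2*x^2) s := by
    simpa using (hasDerivAt_id s).const_mul (2*x^2)
  have hden : HasDerivAt (fun y : ℝ => 1 + y) 1 s := by
    simpa using (hasDerivAt_id s).const_add 1
  have hu : HasDerivAt (fun y : ℝ => 2*x^2*y/(1+y))
      ((2*x^2*(1+s) - 2*x^2*s*1)/(1+s)^2) s := hnum.div hden hp.ne'
  have hE : HasDerivAt (fun y : ℝ => Real.exp (-(2*x^2*y/(1+y))))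
      (Real.exp (-(2*x^2*s/(1+s))) * (-((2*x^2*(1+s) - 2*x^2*s*1)/(1+s)^2))) s := by
    exact (hu.neg).exp
  have hbase : HasDerivAt (fun y : ℝ => 1 - y^2) (-(2*s)) s := by
    have := (hasDerivAt_pow 2 s).const_sub 1
    norm_num at this
    convert this using 1
  have hv : HasDerivAt (fun y : ℝ => (1 - y^2) ^ ((1:ℝ)/2))
      ((-(2*s)) * ((1:ℝ)/2) * (1 - s^2) ^ ((1:ℝ)/2 - 1)) s :=
    hbase.rpow_const (Or.inl hb.ne')
  have hGG : HasDerivAt (GG x)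
      (((-(2*s)) * ((1:ℝ)/2) * (1 - s^2) ^ ((1:ℝ)/2 - 1)) * Real.exp (-(2*x^2*s/(1+s)))
        + (1 - s^2) ^ ((1:ℝ)/2) *
          (Real.exp (-(2*x^2*s/(1+s))) * (-((2*x^2*(1+s) - 2*x^2*s*1)/(1+s)^2)))) s :=
    hv.mul hE
  have hff : HasDerivAt (ff x) (dd x s) s := hasDerivAt_ff x habs
  have hN := hff.mul hGG
  refine hN.congr_deriv ?_
  -- show the derivative value is zero
  set S := (1 - s^2) ^ ((1:ℝ)/2) with hSdef
  set Sm := (1 - s^2) ^ ((1:ℝ)/2 - 1) with hSmdef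
  set E := Real.exp (-(2*x^2*s/(1+s))) with hEdef
  have hSpos : 0 < S := Real.rpow_pos_of_pos hb _
  have hSm_rel : Sm * (1 - s^2) = S := by
    rw [hSmdef, hSdef]
    nth_rewrite 2 [← Real.rpow_one (1 - s^2)]
    rw [← Real.rpow_add hb]
    norm_num
  have hode := ode x habs
  have hGGval : GG x s = S * E := by rw [GG]
  rw [hGGval]
  have hp2 : ((1+s)^2 : ℝ) ≠ 0 := by positivity
  have key : (dd x s * (S * E) +
      ff x s * (-(2*s) * (1/2) * Sm * E + S * (E * -((2*x^2*(1+s) - 2*x^2*s*1)/(1+s)^2))))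
      * (1+s)^2 = 0 := by
    have expand : (dd x s * (S * E) +
        ff x s * (-(2*s) * (1/2) * Sm * E + S * (E * -((2*x^2*(1+s) - 2*x^2*s*1)/(1+s)^2))))
        * (1+s)^2
        = dd x s * S * E * (1+s)^2 - ff x s * s * Sm * E * (1+s)^2
          - 2*x^2 * ff x s * S * E := by
      field_simp
      ring
    rw [expand]
    linear_combination (Sm*E*(1+s)) * hode + (2*x^2*(ff x s)*E - (dd x s)*E*(1+s)^2) * hSm_rel
  have := (mul_eq_zero.mp key).resolve_right hp2
  linarith [this]

theorem stmt_14 (x : ℝ) (t : ℝ) (ht : t ∈ Set.Ioo (-1 : ℝ) 1) :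
    ∑' n : ℕ, hermiteH n x ^ 2 / (2 ^ n * (n.factorial : ℝ)) * t ^ n
      = (1 - t ^ 2) ^ (-(1 / 2 : ℝ)) * Real.exp (2 * x ^ 2 * t / (1 + t)) := by
  obtain ⟨hm, hp⟩ := ht
  have htmem : t ∈ Set.Ioo (-1:ℝ) 1 := ⟨hm, hp⟩
  have habs : |t| < 1 := abs_lt.2 ⟨hm, hp⟩
  have hb : 0 < 1 - t^2 := by nlinarith
  have h0mem : (0:ℝ) ∈ Set.Ioo (-1:ℝ) 1 := by constructor <;> norm_num
  have hconv : Convex ℝ (Set.Ioo (-1:ℝ) 1) := convex_Ioo _ _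
  set N : ℝ → ℝ := fun y => ff x y * GG x y with hN
  have hdiff : DifferentiableOn ℝ N (Set.Ioo (-1:ℝ) 1) := fun y hy =>
    ((hasDerivAt_N x hy).differentiableAt).differentiableWithinAt
  have hfz : ∀ y ∈ Set.Ioo (-1:ℝ) 1, fderivWithin ℝ N (Set.Ioo (-1:ℝ) 1) y = 0 := by
    intro y hy
    rw [fderivWithin_of_isOpen isOpen_Ioo hy]
    have := ((hasDerivAt_N x hy).hasFDerivAt).fderiv
    rw [this]
    ext z
    simp
  have hNconst : N t = N 0 :=
    hconv.is_const_of_fderivWithin_eq_zero hdiff hfz htmem h0mem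
  have hN0 : N 0 = 1 := by
    rw [hN]
    simp only
    rw [ff_zero, GG_zero, mul_one]
  have hN1 : ff x t * GG x t = 1 := by
    have : N t = ff x t * GG x t := rfl
    rw [← this, hNconst, hN0]
  have hval : (GG x t)⁻¹ = (1 - t^2) ^ (-(1/2:ℝ)) * Real.exp (2*x^2*t/(1+t)) := by
    rw [GG]
    rw [mul_inv, ← Real.rpow_neg hb.le, ← Real.exp_neg, neg_neg]
  calc ∑' n : ℕ, hermiteH n x ^ 2 / (2 ^ n * (n.factorial : ℝ)) * t ^ n
      = ff x t := rfl
    _ = (GG x t)⁻¹ := eq_inv_of_mul_eq_one_left hN1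
    _ = (1 - t ^ 2) ^ (-(1 / 2 : ℝ)) * Real.exp (2 * x ^ 2 * t / (1 + t)) := hval
end

section
/- For every μ > 0, m ∈ ℝ, p ∈ [0,1] and α ∈ ℝ, the superposition ψ_{p,α} = √p·ψ_0 + e^{iα}·√(1−p)·ψ_2 satisfies the μ-independent product identity I_F[ψ_{p,α}] · ∫_{−∞}^{∞} (x−m)²·|ψ_{p,α}(x)|² dx = 4·((p·(1/2) + (1−p)·(5/2))² − 2·cos²(α)·p·(1−p)). -/
open MeasureTheory Real

section Helpers

lemma key_norm (α r1 r2 : ℝ) :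
    ‖(r1 : ℂ) + Complex.exp (↑α * Complex.I) * (r2 : ℂ)‖ ^ 2
      = r1 ^ 2 + r2 ^ 2 + 2 * Real.cos α * r1 * r2 := by
  rw [Complex.sq_norm]
  simp [Complex.normSq_apply, Complex.add_re, Complex.add_im, Complex.mul_re, Complex.mul_im,
    Complex.exp_ofReal_mul_I_re, Complex.exp_ofReal_mul_I_im]
  nlinarith [Real.sin_sq_add_cos_sq α]

lemma intGauss {μ : ℝ} (hμ : 0 < μ) (k : ℕ) :
    Integrable (fun x : ℝ => x ^ k * Real.exp (-μ * x ^ 2)) := by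
  have hk : (-1 : ℝ) < (k : ℝ) := lt_of_lt_of_le (by norm_num) (Nat.cast_nonneg k)
  have h := integrable_rpow_mul_exp_neg_mul_sq hμ hk
  simpa [Real.rpow_natCast] using h

open Filter in
lemma tendGauss {μ : ℝ} (hμ : 0 < μ) (k : ℕ) (l : Filter ℝ) (hl : l ≤ Filter.cocompact ℝ) :
    Tendsto (fun x : ℝ => x ^ k * Real.exp (-μ * x ^ 2)) l (nhds 0) := by
  rw [tendsto_zero_iff_abs_tendsto_zero]
  have h := tendsto_rpow_abs_mul_exp_neg_mul_sq_cocompact hμ (k : ℝ)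
  have h2 : Tendsto (fun x : ℝ => |x| ^ ((k : ℝ)) * Real.exp (-μ * x ^ 2)) l (nhds 0) :=
    h.mono_left hl
  refine h2.congr fun x => ?_
  simp only [Function.comp]
  rw [Real.rpow_natCast, abs_mul, abs_pow, abs_of_nonneg (Real.exp_pos _).le]

open Filter in
lemma integral_deriv_zero (f f' : ℝ → ℝ) (hd : ∀ x, HasDerivAt f (f' x) x)
    (hi : Integrable f') (ht : Tendsto f atTop (nhds 0)) (hb : Tendsto f atBot (nhds 0)) :
    ∫ x : ℝ, f' x = 0 := by
  have h1 := integral_Iic_of_hasDerivAt_of_tendsto' (a := 0) (fun x _ => hd x)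
    hi.integrableOn hb
  have h2 := integral_Ioi_of_hasDerivAt_of_tendsto' (a := 0) (fun x _ => hd x)
    hi.integrableOn ht
  rw [← intervalIntegral.integral_Iic_add_Ioi hi.integrableOn hi.integrableOn, h1, h2]
  ring

open Filter in
lemma mom_rec {μ : ℝ} (hμ : 0 < μ) (k : ℕ) :
    ∫ x : ℝ, x ^ (k + 2) * Real.exp (-μ * x ^ 2)
      = ((k + 1 : ℝ) / (2 * μ)) * ∫ x : ℝ, x ^ k * Real.exp (-μ * x ^ 2) := by
  set f : ℝ → ℝ := fun x => x ^ (k + 1) * Real.exp (-μ * x ^ 2) with hf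
  set f' : ℝ → ℝ := fun x =>
    (k + 1 : ℝ) * (x ^ k * Real.exp (-μ * x ^ 2)) - (2 * μ) * (x ^ (k + 2) * Real.exp (-μ * x ^ 2))
    with hf'
  have hd : ∀ x, HasDerivAt f (f' x) x := by
    intro x
    have h1 : HasDerivAt (fun x : ℝ => x ^ (k + 1)) ((k + 1 : ℕ) * x ^ k) x := by
      simpa using hasDerivAt_pow (k + 1) x
    have h2 : HasDerivAt (fun x : ℝ => Real.exp (-μ * x ^ 2))
        (Real.exp (-μ * x ^ 2) * (-μ * (2 * x))) x := by
      have := ((hasDerivAt_pow 2 x).const_mul (-μ)).exp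
      simpa using this
    have := h1.mul h2
    refine this.congr_deriv ?_
    simp only [hf']
    push_cast
    ring
  have hz := integral_deriv_zero f f' hd
    (((intGauss hμ k).const_mul _).sub ((intGauss hμ (k + 2)).const_mul _))
    (tendGauss hμ (k + 1) atTop (by rw [cocompact_eq_atBot_atTop]; exact le_sup_right))
    (tendGauss hμ (k + 1) atBot (by rw [cocompact_eq_atBot_atTop]; exact le_sup_left))
  rw [hf'] at hz
  rw [integral_sub ((intGauss hμ k).const_mul _) ((intGauss hμ (k + 2)).const_mul _),
    integral_const_mul, integral_const_mul] at hz
  have h2μ : (2 * μ) ≠ 0 := by positivity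
  rw [div_mul_eq_mul_div, eq_div_iff h2μ]
  linarith [hz]

lemma integral_poly_gauss {μ : ℝ} (hμ : 0 < μ) (a0 a1 a2 a3 : ℝ) :
    ∫ u : ℝ, (a0 + a1 * u ^ 2 + a2 * u ^ 4 + a3 * u ^ 6) * Real.exp (-μ * u ^ 2)
      = (a0 + a1 * (1 / (2 * μ)) + a2 * (3 / (4 * μ ^ 2)) + a3 * (15 / (8 * μ ^ 3)))
          * Real.sqrt (π / μ) := by
  have hμ' : μ ≠ 0 := ne_of_gt hμ
  have h0 : ∫ u : ℝ, u ^ 0 * Real.exp (-μ * u ^ 2) = Real.sqrt (π / μ) := by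
    simpa using integral_gaussian μ
  have h2 : ∫ u : ℝ, u ^ 2 * Real.exp (-μ * u ^ 2) = (1 / (2 * μ)) * Real.sqrt (π / μ) := by
    have := mom_rec hμ 0
    rw [h0] at this
    rw [this]; push_cast; ring
  have h4 : ∫ u : ℝ, u ^ 4 * Real.exp (-μ * u ^ 2) = (3 / (4 * μ ^ 2)) * Real.sqrt (π / μ) := by
    have := mom_rec hμ 2
    rw [h2] at this
    rw [this]; push_cast; field_simp; ring
  have h6 : ∫ u : ℝ, u ^ 6 * Real.exp (-μ * u ^ 2) = (15 / (8 * μ ^ 3)) * Real.sqrt (π / μ) := by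
    have := mom_rec hμ 4
    rw [h4] at this
    rw [this]; push_cast; field_simp; ring
  have hsplit : (fun u : ℝ => (a0 + a1 * u ^ 2 + a2 * u ^ 4 + a3 * u ^ 6) * Real.exp (-μ * u ^ 2))
      = fun u : ℝ => a0 * (u ^ 0 * Real.exp (-μ * u ^ 2)) + (a1 * (u ^ 2 * Real.exp (-μ * u ^ 2))
          + (a2 * (u ^ 4 * Real.exp (-μ * u ^ 2)) + a3 * (u ^ 6 * Real.exp (-μ * u ^ 2)))) := by
    funext u; ring
  have I2 : Integrable (fun u : ℝ => a1 * (u ^ 2 * Real.exp (-μ * u ^ 2))) :=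
    (intGauss hμ 2).const_mul _
  have I4 : Integrable (fun u : ℝ => a2 * (u ^ 4 * Real.exp (-μ * u ^ 2))) :=
    (intGauss hμ 4).const_mul _
  have I6 : Integrable (fun u : ℝ => a3 * (u ^ 6 * Real.exp (-μ * u ^ 2))) :=
    (intGauss hμ 6).const_mul _
  have I46 : Integrable (fun u : ℝ => a2 * (u ^ 4 * Real.exp (-μ * u ^ 2))
      + a3 * (u ^ 6 * Real.exp (-μ * u ^ 2))) := I4.add I6
  have I246 : Integrable (fun u : ℝ => a1 * (u ^ 2 * Real.exp (-μ * u ^ 2))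
      + (a2 * (u ^ 4 * Real.exp (-μ * u ^ 2)) + a3 * (u ^ 6 * Real.exp (-μ * u ^ 2)))) :=
    I2.add I46
  rw [hsplit, integral_add ((intGauss hμ 0).const_mul _) I246,
    integral_add I2 I46, integral_add I4 I6,
    integral_const_mul, integral_const_mul, integral_const_mul, integral_const_mul,
    h0, h2, h4, h6]
  ring

end Helpers

theorem stmt_18 (μ m : ℝ) (hμ : 0 < μ) (p : ℝ) (hp : p ∈ Set.Icc (0 : ℝ) 1) (α : ℝ) :
    (4 * ∫ x : ℝ,
        ‖deriv (fun y : ℝ =>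
            (Real.sqrt p : ℂ) * (ψ μ m 0 y : ℂ)
              + Complex.exp (α * Complex.I) * (Real.sqrt (1 - p) : ℂ) * (ψ μ m 2 y : ℂ)) x‖ ^ 2)
      * ∫ x : ℝ,
          (x - m) ^ 2 *
            ‖(Real.sqrt p : ℂ) * (ψ μ m 0 x : ℂ)
              + Complex.exp (α * Complex.I) * (Real.sqrt (1 - p) : ℂ) * (ψ μ m 2 x : ℂ)‖ ^ 2
      = 4 * ((p * (1 / 2) + (1 - p) * (5 / 2)) ^ 2 - 2 * Real.cos α ^ 2 * p * (1 - p)) := by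
  obtain ⟨hp0, hp1⟩ := hp
  have hμ' : μ ≠ 0 := ne_of_gt hμ
  have hs : Real.sqrt μ * Real.sqrt μ = μ := Real.mul_self_sqrt hμ.le
  set c0 : ℝ := Real.sqrt (Real.sqrt μ / Real.sqrt π) with hc0def
  set c2 : ℝ := Real.sqrt (Real.sqrt μ / (8 * Real.sqrt π)) with hc2def
  set E : ℝ → ℝ := fun y => Real.exp (-(μ * (y - m) ^ 2) / 2) with hEdef
  have hψ0 : ∀ y : ℝ, ψ μ m 0 y = c0 * E y := by
    intro y; simp [ψ, hermiteH, hc0def, hEdef]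
  have hψ2 : ∀ y : ℝ, ψ μ m 2 y = c2 * (E y * (4 * μ * (y - m) ^ 2 - 2)) := by
    intro y
    have ht : hermiteH 2 (Real.sqrt μ * (y - m)) = 4 * μ * (y - m) ^ 2 - 2 := by
      simp [hermiteH]
      linear_combination (4 * (y - m) ^ 2) * hs
    rw [ψ, ht]
    simp only [hc2def, hEdef]
    norm_num [Nat.factorial]
    ring
  set a : ℝ := Real.sqrt p * c0 with hadef
  set r : ℝ := Real.sqrt (1 - p) * c2 with hrdef
  -- pointwise form of the wave function
  have hbody : ∀ x : ℝ,
      (Real.sqrt p : ℂ) * (ψ μ m 0 x : ℂ)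
          + Complex.exp (α * Complex.I) * (Real.sqrt (1 - p) : ℂ) * (ψ μ m 2 x : ℂ)
        = ((a * E x : ℝ) : ℂ)
          + Complex.exp (↑α * Complex.I) * ((r * (E x * (4 * μ * (x - m) ^ 2 - 2)) : ℝ) : ℂ) := by
    intro x
    rw [hψ0 x, hψ2 x, hadef, hrdef]
    push_cast
    ring
  have hFeq : (fun y : ℝ =>
        (Real.sqrt p : ℂ) * (ψ μ m 0 y : ℂ)
          + Complex.exp (α * Complex.I) * (Real.sqrt (1 - p) : ℂ) * (ψ μ m 2 y : ℂ))
      = fun y : ℝ => ((a * E y : ℝ) : ℂ)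
          + Complex.exp (↑α * Complex.I) * ((r * (E y * (4 * μ * (y - m) ^ 2 - 2)) : ℝ) : ℂ) :=
    funext hbody
  -- derivatives
  have hE : ∀ x : ℝ, HasDerivAt E (E x * (-(μ * (x - m)))) x := by
    intro x
    have h1 : HasDerivAt (fun y : ℝ => -(μ * (y - m) ^ 2) / 2) (-(μ * (x - m))) x := by
      have h := ((((hasDerivAt_id x).sub_const m).pow 2).const_mul μ).neg.div_const 2
      refine h.congr_deriv ?_
      simp only [id_eq]
      push_cast
      ring
    simpa [hEdef] using h1.exp
  have hP : ∀ x : ℝ, HasDerivAt (fun y : ℝ => 4 * μ * (y - m) ^ 2 - 2) (8 * μ * (x - m)) x := by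
    intro x
    have h := ((((hasDerivAt_id x).sub_const m).pow 2).const_mul (4 * μ)).sub_const 2
    refine h.congr_deriv ?_
    simp only [id_eq]
    push_cast
    ring
  have hC : ∀ x : ℝ, HasDerivAt
      (fun y : ℝ => ((a * E y : ℝ) : ℂ)
        + Complex.exp (↑α * Complex.I) * ((r * (E y * (4 * μ * (y - m) ^ 2 - 2)) : ℝ) : ℂ))
      (((a * (E x * (-(μ * (x - m)))) : ℝ) : ℂ)
        + Complex.exp (↑α * Complex.I) *
          ((r * (E x * (-(μ * (x - m))) * (4 * μ * (x - m) ^ 2 - 2)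
            + E x * (8 * μ * (x - m))) : ℝ) : ℂ)) x := by
    intro x
    have h1 : HasDerivAt (fun y => a * E y) (a * (E x * (-(μ * (x - m))))) x :=
      (hE x).const_mul a
    have h2 : HasDerivAt (fun y => r * (E y * (4 * μ * (y - m) ^ 2 - 2)))
        (r * (E x * (-(μ * (x - m))) * (4 * μ * (x - m) ^ 2 - 2)
          + E x * (8 * μ * (x - m)))) x := by
      have h := ((hE x).mul (hP x)).const_mul r
      exact h.congr_deriv (by ring)
    have g1 := h1.ofReal_comp
    have g3 := (h2.ofReal_comp).const_mul (Complex.exp (↑α * Complex.I))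
    have g4 := g1.add g3
    refine g4.congr_deriv ?_
    push_cast
    ring
  have hD : ∀ x : ℝ, deriv (fun y : ℝ =>
        (Real.sqrt p : ℂ) * (ψ μ m 0 y : ℂ)
          + Complex.exp (α * Complex.I) * (Real.sqrt (1 - p) : ℂ) * (ψ μ m 2 y : ℂ)) x
      = ((a * (E x * (-(μ * (x - m)))) : ℝ) : ℂ)
        + Complex.exp (↑α * Complex.I) *
          ((r * (E x * (-(μ * (x - m))) * (4 * μ * (x - m) ^ 2 - 2)
            + E x * (8 * μ * (x - m))) : ℝ) : ℂ) := by
    intro x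
    rw [hFeq]
    exact (hC x).deriv
  have hEE : ∀ x : ℝ, E x * E x = Real.exp (-μ * (x - m) ^ 2) := by
    intro x
    simp only [hEdef]
    rw [← Real.exp_add]
    congr 1
    ring
  -- the two integrals
  have h1 : ∀ x : ℝ, ‖deriv (fun y : ℝ =>
        (Real.sqrt p : ℂ) * (ψ μ m 0 y : ℂ)
          + Complex.exp (α * Complex.I) * (Real.sqrt (1 - p) : ℂ) * (ψ μ m 2 y : ℂ)) x‖ ^ 2
      = ((0 : ℝ) + (μ ^ 2 * (a ^ 2 + 100 * r ^ 2 - 20 * Real.cos α * a * r)) * (x - m) ^ 2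
          + (μ ^ 3 * (8 * Real.cos α * a * r - 80 * r ^ 2)) * (x - m) ^ 4
          + (16 * μ ^ 4 * r ^ 2) * (x - m) ^ 6) * Real.exp (-μ * (x - m) ^ 2) := by
    intro x
    rw [hD x, key_norm, ← hEE x]
    ring
  have h2 : ∀ x : ℝ, (x - m) ^ 2 *
        ‖(Real.sqrt p : ℂ) * (ψ μ m 0 x : ℂ)
          + Complex.exp (α * Complex.I) * (Real.sqrt (1 - p) : ℂ) * (ψ μ m 2 x : ℂ)‖ ^ 2
      = ((0 : ℝ) + (a ^ 2 + 4 * r ^ 2 - 4 * Real.cos α * a * r) * (x - m) ^ 2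
          + (μ * (8 * Real.cos α * a * r - 16 * r ^ 2)) * (x - m) ^ 4
          + (16 * μ ^ 2 * r ^ 2) * (x - m) ^ 6) * Real.exp (-μ * (x - m) ^ 2) := by
    intro x
    rw [hbody x, key_norm, ← hEE x]
    ring
  have e1 : (∫ x : ℝ, ‖deriv (fun y : ℝ =>
        (Real.sqrt p : ℂ) * (ψ μ m 0 y : ℂ)
          + Complex.exp (α * Complex.I) * (Real.sqrt (1 - p) : ℂ) * (ψ μ m 2 y : ℂ)) x‖ ^ 2)
      = ((0 : ℝ) + (μ ^ 2 * (a ^ 2 + 100 * r ^ 2 - 20 * Real.cos α * a * r)) * (1 / (2 * μ))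
          + (μ ^ 3 * (8 * Real.cos α * a * r - 80 * r ^ 2)) * (3 / (4 * μ ^ 2))
          + (16 * μ ^ 4 * r ^ 2) * (15 / (8 * μ ^ 3))) * Real.sqrt (π / μ) := by
    simp only [h1]
    rw [show (∫ x : ℝ,
          ((0 : ℝ) + (μ ^ 2 * (a ^ 2 + 100 * r ^ 2 - 20 * Real.cos α * a * r)) * (x - m) ^ 2
            + (μ ^ 3 * (8 * Real.cos α * a * r - 80 * r ^ 2)) * (x - m) ^ 4
            + (16 * μ ^ 4 * r ^ 2) * (x - m) ^ 6) * Real.exp (-μ * (x - m) ^ 2))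
        = ∫ u : ℝ,
          ((0 : ℝ) + (μ ^ 2 * (a ^ 2 + 100 * r ^ 2 - 20 * Real.cos α * a * r)) * u ^ 2
            + (μ ^ 3 * (8 * Real.cos α * a * r - 80 * r ^ 2)) * u ^ 4
            + (16 * μ ^ 4 * r ^ 2) * u ^ 6) * Real.exp (-μ * u ^ 2)
      from integral_sub_right_eq_self (fun u : ℝ =>
          ((0 : ℝ) + (μ ^ 2 * (a ^ 2 + 100 * r ^ 2 - 20 * Real.cos α * a * r)) * u ^ 2
            + (μ ^ 3 * (8 * Real.cos α * a * r - 80 * r ^ 2)) * u ^ 4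
            + (16 * μ ^ 4 * r ^ 2) * u ^ 6) * Real.exp (-μ * u ^ 2)) m]
    exact integral_poly_gauss hμ _ _ _ _
  have e2 : (∫ x : ℝ, (x - m) ^ 2 *
        ‖(Real.sqrt p : ℂ) * (ψ μ m 0 x : ℂ)
          + Complex.exp (α * Complex.I) * (Real.sqrt (1 - p) : ℂ) * (ψ μ m 2 x : ℂ)‖ ^ 2)
      = ((0 : ℝ) + (a ^ 2 + 4 * r ^ 2 - 4 * Real.cos α * a * r) * (1 / (2 * μ))
          + (μ * (8 * Real.cos α * a * r - 16 * r ^ 2)) * (3 / (4 * μ ^ 2))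
          + (16 * μ ^ 2 * r ^ 2) * (15 / (8 * μ ^ 3))) * Real.sqrt (π / μ) := by
    simp only [h2]
    rw [show (∫ x : ℝ,
          ((0 : ℝ) + (a ^ 2 + 4 * r ^ 2 - 4 * Real.cos α * a * r) * (x - m) ^ 2
            + (μ * (8 * Real.cos α * a * r - 16 * r ^ 2)) * (x - m) ^ 4
            + (16 * μ ^ 2 * r ^ 2) * (x - m) ^ 6) * Real.exp (-μ * (x - m) ^ 2))
        = ∫ u : ℝ,
          ((0 : ℝ) + (a ^ 2 + 4 * r ^ 2 - 4 * Real.cos α * a * r) * u ^ 2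
            + (μ * (8 * Real.cos α * a * r - 16 * r ^ 2)) * u ^ 4
            + (16 * μ ^ 2 * r ^ 2) * u ^ 6) * Real.exp (-μ * u ^ 2)
      from integral_sub_right_eq_self (fun u : ℝ =>
          ((0 : ℝ) + (a ^ 2 + 4 * r ^ 2 - 4 * Real.cos α * a * r) * u ^ 2
            + (μ * (8 * Real.cos α * a * r - 16 * r ^ 2)) * u ^ 4
            + (16 * μ ^ 2 * r ^ 2) * u ^ 6) * Real.exp (-μ * u ^ 2)) m]
    exact integral_poly_gauss hμ _ _ _ _
  rw [e1, e2]
  -- final algebra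
  have hπ : Real.sqrt π ≠ 0 := by positivity
  have hsμ : Real.sqrt μ ≠ 0 := by positivity
  have hg : c0 ^ 2 * Real.sqrt (π / μ) = 1 := by
    rw [hc0def, Real.sq_sqrt (by positivity), Real.sqrt_div Real.pi_pos.le]
    field_simp
  have hg2 : c2 ^ 2 * Real.sqrt (π / μ) = 1 / 8 := by
    rw [hc2def, Real.sq_sqrt (by positivity), Real.sqrt_div Real.pi_pos.le]
    field_simp
  have ha2 : a ^ 2 * Real.sqrt (π / μ) = p := by
    calc a ^ 2 * Real.sqrt (π / μ) = (Real.sqrt p) ^ 2 * (c0 ^ 2 * Real.sqrt (π / μ)) := by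
          rw [hadef]; ring
      _ = p := by rw [hg, Real.sq_sqrt hp0, mul_one]
  have hr2 : r ^ 2 * Real.sqrt (π / μ) = (1 - p) / 8 := by
    calc r ^ 2 * Real.sqrt (π / μ) = (Real.sqrt (1 - p)) ^ 2 * (c2 ^ 2 * Real.sqrt (π / μ)) := by
          rw [hrdef]; ring
      _ = (1 - p) / 8 := by rw [hg2, Real.sq_sqrt (by linarith)]; ring
  have h4a : a ^ 4 * Real.sqrt (π / μ) ^ 2 = p ^ 2 := by
    calc a ^ 4 * Real.sqrt (π / μ) ^ 2 = (a ^ 2 * Real.sqrt (π / μ)) ^ 2 := by ring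
      _ = p ^ 2 := by rw [ha2]
  have h4r : r ^ 4 * Real.sqrt (π / μ) ^ 2 = ((1 - p) / 8) ^ 2 := by
    calc r ^ 4 * Real.sqrt (π / μ) ^ 2 = (r ^ 2 * Real.sqrt (π / μ)) ^ 2 := by ring
      _ = ((1 - p) / 8) ^ 2 := by rw [hr2]
  have h22 : a ^ 2 * r ^ 2 * Real.sqrt (π / μ) ^ 2 = p * ((1 - p) / 8) := by
    calc a ^ 2 * r ^ 2 * Real.sqrt (π / μ) ^ 2
        = (a ^ 2 * Real.sqrt (π / μ)) * (r ^ 2 * Real.sqrt (π / μ)) := by ring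
      _ = p * ((1 - p) / 8) := by rw [ha2, hr2]
  have s1 : ((0 : ℝ) + (μ ^ 2 * (a ^ 2 + 100 * r ^ 2 - 20 * Real.cos α * a * r)) * (1 / (2 * μ))
          + (μ ^ 3 * (8 * Real.cos α * a * r - 80 * r ^ 2)) * (3 / (4 * μ ^ 2))
          + (16 * μ ^ 4 * r ^ 2) * (15 / (8 * μ ^ 3)))
      = μ / 2 * (a ^ 2 + 40 * r ^ 2 - 8 * Real.cos α * a * r) := by
    field_simp
    ring
  have s2 : ((0 : ℝ) + (a ^ 2 + 4 * r ^ 2 - 4 * Real.cos α * a * r) * (1 / (2 * μ))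
          + (μ * (8 * Real.cos α * a * r - 16 * r ^ 2)) * (3 / (4 * μ ^ 2))
          + (16 * μ ^ 2 * r ^ 2) * (15 / (8 * μ ^ 3)))
      = (a ^ 2 + 40 * r ^ 2 + 8 * Real.cos α * a * r) / (2 * μ) := by
    field_simp
    ring
  rw [s1, s2]
  have s3 : ∀ X Y G : ℝ, 4 * (μ / 2 * X * G) * (Y / (2 * μ) * G) = X * Y * G ^ 2 := by
    intro X Y G
    field_simp
    ring
  rw [s3]
  linear_combination h4a + (80 - 64 * Real.cos α ^ 2) * h22 + 1600 * h4r
end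

section
/- The function G(p,α) = 4·((p·(1/2) + (1−p)·(5/2))² − 2·cos²(α)·p·(1−p)) (the risk-normalized Fisher information of the superposition √p·ψ_0 + e^{iα}√(1−p)·ψ_2 at fixed risk) attains its minimum over p ∈ [0,1] and α ∈ ℝ at p = 1, where G(1,α) = 1 for every α; hence in the transactional (fixed-risk) picture the ground state minimizes Fisher information, with I_F = 1/r. -/
open Real

/-! Writing `cos² α = 1 - sin² α`, the excess `G(p, α) - 1` becomes the sum of squares
`24 (1 - p)² + 8 sin² α · p (1 - p)`, which is nonnegative on `[0, 1]` and vanishes at `p = 1`. -/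

theorem fisher_superposition_sub_one (p α : ℝ) :
    4 * ((p * (1 / 2) + (1 - p) * (5 / 2)) ^ 2 - 2 * cos α ^ 2 * p * (1 - p)) - 1
      = 24 * (1 - p) ^ 2 + 8 * sin α ^ 2 * p * (1 - p) := by
  linear_combination (-8 * p * (1 - p)) * sin_sq_add_cos_sq α

theorem one_le_fisher_superposition {p : ℝ} (hp : p ∈ Set.Icc (0 : ℝ) 1) (α : ℝ) :
    1 ≤ 4 * ((p * (1 / 2) + (1 - p) * (5 / 2)) ^ 2 - 2 * cos α ^ 2 * p * (1 - p)) := by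
  have h := fisher_superposition_sub_one p α
  have hp' : 0 ≤ p * (1 - p) := mul_nonneg hp.1 (sub_nonneg.2 hp.2)
  nlinarith [sq_nonneg (1 - p), mul_nonneg (sq_nonneg (sin α)) hp']

theorem stmt_19 :
    (∀ α : ℝ,
        4 * (((1 : ℝ) * (1 / 2) + (1 - 1) * (5 / 2)) ^ 2
            - 2 * Real.cos α ^ 2 * 1 * (1 - 1)) = 1)
    ∧ ∀ p ∈ Set.Icc (0 : ℝ) 1, ∀ α : ℝ,
        (1 : ℝ) ≤ 4 * ((p * (1 / 2) + (1 - p) * (5 / 2)) ^ 2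
            - 2 * Real.cos α ^ 2 * p * (1 - p)) :=
  ⟨fun α => by linear_combination fisher_superposition_sub_one 1 α,
    fun _ hp α => one_le_fisher_superposition hp α⟩
end
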